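/- arXiv:1902.08839 — 7 statements merged into one kernel-verified Lean document; each statement's English description precedes it below -/
import Mathlib

section
/- Let ȳ ∈ (0,∞], k ∈ (0,ȳ], m a monotone measure on (X,𝒜), and ▵ : m(𝒜)×m(𝒜) → m(𝒜) with a ▵ 0 = 0 ▵ a = 0 for all a ∈ m(𝒜). Let ⋆,⊥ : [0,ȳ]² → [0,ȳ] be nondecreasing binary operations with ⊥ left-continuous. Let φ₁ : [0,ȳ] → [0,ȳ] be nondecreasing and φ₂, φ₃ : [0,ȳ] → [0,ȳ] be increasing and right-continuous; let ψᵢ : [0,φᵢ(ȳ)] → [0,ȳ] be nondecreasing for i=1,2,3 with ψ₂, ψ₃ left-continuous. Let ∘ᵢ : [0,ȳ] × m(𝒜) → [0,ȳ] be nondecreasing with φᵢ(ȳ) ∘ᵢ m(X) ≤ φᵢ(ȳ) for i=1,2,3 and ȳ ∘ᵢ 0 = 0 for i=1,2,3. Assume condition (Z₁): for all c,d ∈ m(𝒜) there exist C,D ∈ 𝒜 with m(C)=c, m(D)=d and m(C∩D) = c ▵ d. If the inequality ψ₁(I_{∘₁, A∩B}(φ₁(f⋆g))) ≥ ψ₂(I_{∘₂,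 A}(φ₂(f))) ⊥ ψ₃(I_{∘₃, B}(φ₃(g))) holds for all A,B ∈ 𝒜 and all f,g ∈ F^k such that f|_A and g|_B are m-positively dependent with respect to ▵, then ψ₁(φ₁(a⋆b) ∘₁ (c▵d)) ≥ ψ₂(φ₂(a) ∘₂ c) ⊥ ψ₃(φ₃(b) ∘₃ d) for all a,b ∈ [0,k] and all c,d ∈ m(𝒜). -/
/-! Test the inequality on indicator functions: by (Z₁) pick `C`, `D` with `m C = c`, `m D = d` and
`m (C ∩ D) = c ▵ d`, and take `f = a·𝟙_C`, `g = b·𝟙_D`. Their restrictions to `C` and `D` are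
m-positively dependent, and on a set where the integrand is constant the generalized Sugeno
integral is just `v ∘ m(set)`, so the assumed inequality becomes the claimed one. -/

open Set ENNReal

noncomputable def uSugeno {X : Type*} (ybar : ℝ≥0∞) (op : ℝ≥0∞ → ℝ≥0∞ → ℝ≥0∞)
    (m : Set X → ℝ≥0∞) (D : Set X) (f : X → ℝ≥0∞) : ℝ≥0∞ :=
  ⨆ t ∈ Set.Iic ybar, op t (m (D ∩ {x | t ≤ f x}))

noncomputable def qInt {X : Type*} (oti : ℝ≥0∞ → ℝ≥0∞ → ℝ≥0∞)
    (m : Set X → ℝ≥0∞) (f : X → ℝ≥0∞) : ℝ≥0∞ :=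
  ⨆ t ∈ Set.Iic (1 : ℝ≥0∞), oti (m {x | t ≤ f x}) t

def Mono2On (op : ℝ≥0∞ → ℝ≥0∞ → ℝ≥0∞) (s t : Set ℝ≥0∞) : Prop :=
  ∀ ⦃a₁⦄, a₁ ∈ s → ∀ ⦃b₁⦄, b₁ ∈ t → ∀ ⦃a₂⦄, a₂ ∈ s → ∀ ⦃b₂⦄, b₂ ∈ t →
    a₁ ≤ a₂ → b₁ ≤ b₂ → op a₁ b₁ ≤ op a₂ b₂

def LeftContOn (g : ℝ≥0∞ → ℝ≥0∞) (s : Set ℝ≥0∞) : Prop :=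
  ∀ x ∈ s, ContinuousWithinAt g (Set.Iic x) x

def RightContOn (g : ℝ≥0∞ → ℝ≥0∞) (s : Set ℝ≥0∞) : Prop :=
  ∀ x ∈ s, ContinuousWithinAt g (Set.Ici x) x

def LeftCont2On (op : ℝ≥0∞ → ℝ≥0∞ → ℝ≥0∞) (s t : Set ℝ≥0∞) : Prop :=
  (∀ b ∈ t, ∀ a ∈ s, ContinuousWithinAt (fun x => op x b) (Set.Iic a) a) ∧
  (∀ a ∈ s, ∀ b ∈ t, ContinuousWithinAt (fun y => op a y) (Set.Iic b) b)

def mRange {X : Type*} [MeasurableSpace X] (m : Set X → ℝ≥0∞) : Set ℝ≥0∞ :=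
  {c | ∃ A : Set X, MeasurableSet A ∧ m A = c}

def MonotoneMeasure {X : Type*} [MeasurableSpace X] (m : Set X → ℝ≥0∞) : Prop :=
  m ∅ = 0 ∧ 0 < m Set.univ ∧
    ∀ ⦃A B : Set X⦄, MeasurableSet A → MeasurableSet B → A ⊆ B → m A ≤ m B

def IsCapacity {X : Type*} [MeasurableSpace X] (m : Set X → ℝ≥0∞) : Prop :=
  m ∅ = 0 ∧ m Set.univ = 1 ∧
    ∀ ⦃A B : Set X⦄, MeasurableSet A → MeasurableSet B → A ⊆ B → m A ≤ m B

def ComonotoneOn {X : Type*} (D : Set X) (f g : X → ℝ≥0∞) : Prop :=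
  ∀ x ∈ D, ∀ y ∈ D, f x < f y → g x ≤ g y

def IsSemicopula (S : ℝ≥0∞ → ℝ≥0∞ → ℝ≥0∞) : Prop :=
  Mono2On S (Set.Iic 1) (Set.Iic 1) ∧
    ∀ a ∈ Set.Iic (1 : ℝ≥0∞), S a 1 = a ∧ S 1 a = a

def MPosDep {X : Type*} (m : Set X → ℝ≥0∞) (tri : ℝ≥0∞ → ℝ≥0∞ → ℝ≥0∞)
    (k : ℝ≥0∞) (A B : Set X) (f g : X → ℝ≥0∞) : Prop :=
  ∀ α ∈ Set.Iic k, ∀ β ∈ Set.Iic k,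
    tri (m (A ∩ {x | α ≤ f x})) (m (B ∩ {x | β ≤ g x})) ≤
      m (A ∩ B ∩ {x | α ≤ f x} ∩ {x | β ≤ g x})

section

variable {X : Type*}

lemma inter_setOf_le_eq_ite {C : Set X} {F : X → ℝ≥0∞} {v : ℝ≥0∞} (hF : ∀ x ∈ C, F x = v)
    (t : ℝ≥0∞) : C ∩ {x | t ≤ F x} = if t ≤ v then C else ∅ := by
  split_ifs with ht
  · exact inter_eq_left.2 fun x hx => show t ≤ F x from (hF x hx).symm ▸ ht
  · exact eq_empty_of_forall_notMem fun x ⟨hx, hle⟩ => ht (hF x hx ▸ hle)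

variable [MeasurableSpace X] {m : Set X → ℝ≥0∞}

lemma uSugeno_eq_of_const_on {ybar : ℝ≥0∞} {op : ℝ≥0∞ → ℝ≥0∞ → ℝ≥0∞}
    (hop_mono : Mono2On op (Iic ybar) (mRange m)) (hop_zero : op ybar 0 = 0) (hm0 : m ∅ = 0)
    {C : Set X} (hC : MeasurableSet C) {F : X → ℝ≥0∞} {v : ℝ≥0∞} (hv : v ≤ ybar)
    (hF : ∀ x ∈ C, F x = v) :
    uSugeno ybar op m C F = op v (m C) := by
  have hCmem : m C ∈ mRange m := ⟨C, hC, rfl⟩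
  have h0mem : (0 : ℝ≥0∞) ∈ mRange m := ⟨∅, MeasurableSet.empty, hm0⟩
  refine le_antisymm (iSup₂_le fun t ht => ?_) ?_
  · rw [inter_setOf_le_eq_ite hF t]
    split_ifs with htv
    · exact hop_mono ht hCmem hv hCmem htv le_rfl
    · calc op t (m ∅) = op t 0 := by rw [hm0]
        _ ≤ op ybar 0 := hop_mono ht h0mem (le_refl ybar) h0mem ht le_rfl
        _ = 0 := hop_zero
        _ ≤ _ := zero_le
  · calc op v (m C) = op v (m (C ∩ {x | v ≤ F x})) := by
          rw [inter_setOf_le_eq_ite hF v, if_pos le_rfl]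
      _ ≤ uSugeno ybar op m C F :=
          le_iSup₂ (f := fun t (_ : t ∈ Iic ybar) => op t (m (C ∩ {x | t ≤ F x}))) v hv

lemma mPosDep_indicator_const {tri : ℝ≥0∞ → ℝ≥0∞ → ℝ≥0∞}
    (htri_zero : ∀ a ∈ mRange m, tri a 0 = 0 ∧ tri 0 a = 0) (hm0 : m ∅ = 0)
    {C D : Set X} (hC : MeasurableSet C) (hD : MeasurableSet D)
    (hCD : m (C ∩ D) = tri (m C) (m D)) (k a b : ℝ≥0∞) :
    MPosDep m tri k C D (C.indicator fun _ => a) (D.indicator fun _ => b) := by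
  intro α _ β _
  have hf : ∀ x ∈ C, C.indicator (fun _ => a) x = a := fun x hx => indicator_of_mem hx _
  have hg : ∀ x ∈ D, D.indicator (fun _ => b) x = b := fun x hx => indicator_of_mem hx _
  rw [inter_assoc (C ∩ D), inter_inter_inter_comm, inter_setOf_le_eq_ite hf,
    inter_setOf_le_eq_ite hg]
  split_ifs
  · exact hCD.ge
  · rw [hm0, (htri_zero _ ⟨C, hC, rfl⟩).1]; exact zero_le
  · rw [hm0, (htri_zero _ ⟨D, hD, rfl⟩).2]; exact zero_le
  · rw [hm0, (htri_zero _ ⟨∅, MeasurableSet.empty, hm0⟩).1]; exact zero_le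

end

theorem statement2_general {X : Type*} [MeasurableSpace X]
    (ybar k : ℝ≥0∞) (hky : k ≤ ybar)
    (m : Set X → ℝ≥0∞) (hm : MonotoneMeasure m)
    (tri : ℝ≥0∞ → ℝ≥0∞ → ℝ≥0∞)
    (htri_zero : ∀ a ∈ mRange m, tri a 0 = 0 ∧ tri 0 a = 0)
    (star bot : ℝ≥0∞ → ℝ≥0∞ → ℝ≥0∞)
    (hstar_maps : ∀ a ∈ Set.Iic ybar, ∀ b ∈ Set.Iic ybar, star a b ∈ Set.Iic ybar)
    (φ₁ φ₂ φ₃ : ℝ≥0∞ → ℝ≥0∞)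
    (hφ₁_maps : Set.MapsTo φ₁ (Set.Iic ybar) (Set.Iic ybar))
    (hφ₂_maps : Set.MapsTo φ₂ (Set.Iic ybar) (Set.Iic ybar))
    (hφ₃_maps : Set.MapsTo φ₃ (Set.Iic ybar) (Set.Iic ybar))
    (ψ₁ ψ₂ ψ₃ : ℝ≥0∞ → ℝ≥0∞)
    (op₁ op₂ op₃ : ℝ≥0∞ → ℝ≥0∞ → ℝ≥0∞)
    (hop₁_mono : Mono2On op₁ (Set.Iic ybar) (mRange m))
    (hop₁_zero : op₁ ybar 0 = 0)
    (hop₂_mono : Mono2On op₂ (Set.Iic ybar) (mRange m))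
    (hop₂_zero : op₂ ybar 0 = 0)
    (hop₃_mono : Mono2On op₃ (Set.Iic ybar) (mRange m))
    (hop₃_zero : op₃ ybar 0 = 0)
    (hZ₁ : ∀ c ∈ mRange m, ∀ d ∈ mRange m, ∃ C D : Set X,
      MeasurableSet C ∧ MeasurableSet D ∧ m C = c ∧ m D = d ∧ m (C ∩ D) = tri c d)
    (hcheb : ∀ (A B : Set X), MeasurableSet A → MeasurableSet B →
      ∀ (f g : X → ℝ≥0∞), Measurable f → Measurable g →
        (∀ x, f x ≤ k) → (∀ x, g x ≤ k) → MPosDep m tri k A B f g →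
          bot (ψ₂ (uSugeno ybar op₂ m A fun x => φ₂ (f x)))
              (ψ₃ (uSugeno ybar op₃ m B fun x => φ₃ (g x)))
            ≤ ψ₁ (uSugeno ybar op₁ m (A ∩ B) fun x => φ₁ (star (f x) (g x)))) :
    ∀ a ∈ Set.Iic k, ∀ b ∈ Set.Iic k, ∀ c ∈ mRange m, ∀ d ∈ mRange m,
      bot (ψ₂ (op₂ (φ₂ a) c)) (ψ₃ (op₃ (φ₃ b) d)) ≤
        ψ₁ (op₁ (φ₁ (star a b)) (tri c d)) := by
  intro a ha b hb c hc d hd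
  obtain ⟨C, D, hC, hD, rfl, rfl, hCD⟩ := hZ₁ c hc d hd
  set f : X → ℝ≥0∞ := C.indicator fun _ => a
  set g : X → ℝ≥0∞ := D.indicator fun _ => b
  have hf : ∀ x ∈ C, f x = a := fun x hx => indicator_of_mem hx _
  have hg : ∀ x ∈ D, g x = b := fun x hx => indicator_of_mem hx _
  have hay : a ≤ ybar := ha.trans hky
  have hby : b ≤ ybar := hb.trans hky
  have key := hcheb C D hC hD f g (measurable_const.indicator hC)
    (measurable_const.indicator hD) (fun x => indicator_apply_le' (fun _ => ha) fun _ => zero_le)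
    (fun x => indicator_apply_le' (fun _ => hb) fun _ => zero_le)
    (mPosDep_indicator_const htri_zero hm.1 hC hD hCD k a b)
  rwa [uSugeno_eq_of_const_on hop₂_mono hop₂_zero hm.1 hC (hφ₂_maps hay)
      fun x hx => by rw [hf x hx],
    uSugeno_eq_of_const_on hop₃_mono hop₃_zero hm.1 hD (hφ₃_maps hby)
      fun x hx => by rw [hg x hx],
    uSugeno_eq_of_const_on hop₁_mono hop₁_zero hm.1 (hC.inter hD)
      (hφ₁_maps (hstar_maps a hay b hby)) fun x hx => by rw [hf x hx.1, hg x hx.2],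
    hCD] at key

theorem statement2 {X : Type*} [MeasurableSpace X]
    (ybar k : ℝ≥0∞) (hybar : 0 < ybar) (hk0 : 0 < k) (hky : k ≤ ybar)
    (m : Set X → ℝ≥0∞) (hm : MonotoneMeasure m)
    (tri : ℝ≥0∞ → ℝ≥0∞ → ℝ≥0∞)
    (htri_maps : ∀ c ∈ mRange m, ∀ d ∈ mRange m, tri c d ∈ mRange m)
    (htri_zero : ∀ a ∈ mRange m, tri a 0 = 0 ∧ tri 0 a = 0)
    (star bot : ℝ≥0∞ → ℝ≥0∞ → ℝ≥0∞)
    (hstar_maps : ∀ a ∈ Set.Iic ybar, ∀ b ∈ Set.Iic ybar, star a b ∈ Set.Iic ybar)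
    (hstar_mono : Mono2On star (Set.Iic ybar) (Set.Iic ybar))
    (hbot_maps : ∀ a ∈ Set.Iic ybar, ∀ b ∈ Set.Iic ybar, bot a b ∈ Set.Iic ybar)
    (hbot_mono : Mono2On bot (Set.Iic ybar) (Set.Iic ybar))
    (hbot_lc : LeftCont2On bot (Set.Iic ybar) (Set.Iic ybar))
    (φ₁ φ₂ φ₃ : ℝ≥0∞ → ℝ≥0∞)
    (hφ₁_maps : Set.MapsTo φ₁ (Set.Iic ybar) (Set.Iic ybar))
    (hφ₁_mono : MonotoneOn φ₁ (Set.Iic ybar))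
    (hφ₂_maps : Set.MapsTo φ₂ (Set.Iic ybar) (Set.Iic ybar))
    (hφ₂_mono : StrictMonoOn φ₂ (Set.Iic ybar))
    (hφ₂_rc : RightContOn φ₂ (Set.Iic ybar))
    (hφ₃_maps : Set.MapsTo φ₃ (Set.Iic ybar) (Set.Iic ybar))
    (hφ₃_mono : StrictMonoOn φ₃ (Set.Iic ybar))
    (hφ₃_rc : RightContOn φ₃ (Set.Iic ybar))
    (ψ₁ ψ₂ ψ₃ : ℝ≥0∞ → ℝ≥0∞)
    (hψ₁_maps : Set.MapsTo ψ₁ (Set.Iic (φ₁ ybar)) (Set.Iic ybar))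
    (hψ₁_mono : MonotoneOn ψ₁ (Set.Iic (φ₁ ybar)))
    (hψ₂_maps : Set.MapsTo ψ₂ (Set.Iic (φ₂ ybar)) (Set.Iic ybar))
    (hψ₂_mono : MonotoneOn ψ₂ (Set.Iic (φ₂ ybar)))
    (hψ₂_lc : LeftContOn ψ₂ (Set.Iic (φ₂ ybar)))
    (hψ₃_maps : Set.MapsTo ψ₃ (Set.Iic (φ₃ ybar)) (Set.Iic ybar))
    (hψ₃_mono : MonotoneOn ψ₃ (Set.Iic (φ₃ ybar)))
    (hψ₃_lc : LeftContOn ψ₃ (Set.Iic (φ₃ ybar)))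
    (op₁ op₂ op₃ : ℝ≥0∞ → ℝ≥0∞ → ℝ≥0∞)
    (hop₁_maps : ∀ a ∈ Set.Iic ybar, ∀ c ∈ mRange m, op₁ a c ∈ Set.Iic ybar)
    (hop₁_mono : Mono2On op₁ (Set.Iic ybar) (mRange m))
    (hop₁_bd : op₁ (φ₁ ybar) (m Set.univ) ≤ φ₁ ybar)
    (hop₁_zero : op₁ ybar 0 = 0)
    (hop₂_maps : ∀ a ∈ Set.Iic ybar, ∀ c ∈ mRange m, op₂ a c ∈ Set.Iic ybar)
    (hop₂_mono : Mono2On op₂ (Set.Iic ybar) (mRange m))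
    (hop₂_bd : op₂ (φ₂ ybar) (m Set.univ) ≤ φ₂ ybar)
    (hop₂_zero : op₂ ybar 0 = 0)
    (hop₃_maps : ∀ a ∈ Set.Iic ybar, ∀ c ∈ mRange m, op₃ a c ∈ Set.Iic ybar)
    (hop₃_mono : Mono2On op₃ (Set.Iic ybar) (mRange m))
    (hop₃_bd : op₃ (φ₃ ybar) (m Set.univ) ≤ φ₃ ybar)
    (hop₃_zero : op₃ ybar 0 = 0)
    (hZ₁ : ∀ c ∈ mRange m, ∀ d ∈ mRange m, ∃ C D : Set X,
      MeasurableSet C ∧ MeasurableSet D ∧ m C = c ∧ m D = d ∧ m (C ∩ D) = tri c d)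
    (hcheb : ∀ (A B : Set X), MeasurableSet A → MeasurableSet B →
      ∀ (f g : X → ℝ≥0∞), Measurable f → Measurable g →
        (∀ x, f x ≤ k) → (∀ x, g x ≤ k) → MPosDep m tri k A B f g →
          bot (ψ₂ (uSugeno ybar op₂ m A fun x => φ₂ (f x)))
              (ψ₃ (uSugeno ybar op₃ m B fun x => φ₃ (g x)))
            ≤ ψ₁ (uSugeno ybar op₁ m (A ∩ B) fun x => φ₁ (star (f x) (g x)))) :
    ∀ a ∈ Set.Iic k, ∀ b ∈ Set.Iic k, ∀ c ∈ mRange m, ∀ d ∈ mRange m,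
      bot (ψ₂ (op₂ (φ₂ a) c)) (ψ₃ (op₃ (φ₃ b) d)) ≤
        ψ₁ (op₁ (φ₁ (star a b)) (tri c d)) :=
  statement2_general ybar k hky m hm tri htri_zero star bot hstar_maps φ₁ φ₂ φ₃ hφ₁_maps hφ₂_maps
    hφ₃_maps ψ₁ ψ₂ ψ₃ op₁ op₂ op₃ hop₁_mono hop₁_zero hop₂_mono hop₂_zero hop₃_mono hop₃_zero hZ₁
    hcheb
end

section
/- Let ȳ ∈ (0,∞], k ∈ (0,ȳ], and let D ⊆ [0,∞] be a set whose supremum d̄ := sup D belongs to D. Let ⋆ : [0,ȳ]² → [0,ȳ] be any binary operation and ⊥ : [0,ȳ]² → [0,ȳ] be nondecreasing. Let φᵢ : [0,ȳ] → [0,ȳ] and ψᵢ : [0,φᵢ(ȳ)] → [0,ȳ] be nondecreasing for i=1,2,3, and let ∘ᵢ : [0,ȳ] × D → [0,ȳ] be nondecreasing with φᵢ(ȳ) ∘ᵢ d̄ ≤ φᵢ(ȳ) for i=1,2,3. Then the following are equivalent: (C₁) ψ₁(φ₁(a⋆b) ∘₁ min(c,d)) ≥ ψ₂(φ₂(a)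 ∘₂ c) ⊥ ψ₃(φ₃(b) ∘₃ d) for all a,b ∈ [0,k] and c,d ∈ D; (C₂) ψ₁(φ₁(a⋆b) ∘₁ c) ≥ max( ψ₂(φ₂(a) ∘₂ c) ⊥ ψ₃(φ₃(b) ∘₃ d̄), ψ₂(φ₂(a) ∘₂ d̄) ⊥ ψ₃(φ₃(b) ∘₃ c) ) for all a,b ∈ [0,k] and c ∈ D. -/
open Set ENNReal

theorem statement3 (ybar k : ℝ≥0∞) (hybar : 0 < ybar) (hk0 : 0 < k) (hky : k ≤ ybar)
    (D : Set ℝ≥0∞) (hD : sSup D ∈ D)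
    (star bot : ℝ≥0∞ → ℝ≥0∞ → ℝ≥0∞)
    (hstar_maps : ∀ a ∈ Set.Iic ybar, ∀ b ∈ Set.Iic ybar, star a b ∈ Set.Iic ybar)
    (hbot_maps : ∀ a ∈ Set.Iic ybar, ∀ b ∈ Set.Iic ybar, bot a b ∈ Set.Iic ybar)
    (hbot_mono : Mono2On bot (Set.Iic ybar) (Set.Iic ybar))
    (φ₁ φ₂ φ₃ : ℝ≥0∞ → ℝ≥0∞)
    (hφ₁_maps : Set.MapsTo φ₁ (Set.Iic ybar) (Set.Iic ybar))
    (hφ₁_mono : MonotoneOn φ₁ (Set.Iic ybar))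
    (hφ₂_maps : Set.MapsTo φ₂ (Set.Iic ybar) (Set.Iic ybar))
    (hφ₂_mono : MonotoneOn φ₂ (Set.Iic ybar))
    (hφ₃_maps : Set.MapsTo φ₃ (Set.Iic ybar) (Set.Iic ybar))
    (hφ₃_mono : MonotoneOn φ₃ (Set.Iic ybar))
    (ψ₁ ψ₂ ψ₃ : ℝ≥0∞ → ℝ≥0∞)
    (hψ₁_maps : Set.MapsTo ψ₁ (Set.Iic (φ₁ ybar)) (Set.Iic ybar))
    (hψ₁_mono : MonotoneOn ψ₁ (Set.Iic (φ₁ ybar)))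
    (hψ₂_maps : Set.MapsTo ψ₂ (Set.Iic (φ₂ ybar)) (Set.Iic ybar))
    (hψ₂_mono : MonotoneOn ψ₂ (Set.Iic (φ₂ ybar)))
    (hψ₃_maps : Set.MapsTo ψ₃ (Set.Iic (φ₃ ybar)) (Set.Iic ybar))
    (hψ₃_mono : MonotoneOn ψ₃ (Set.Iic (φ₃ ybar)))
    (op₁ op₂ op₃ : ℝ≥0∞ → ℝ≥0∞ → ℝ≥0∞)
    (hop₁_maps : ∀ a ∈ Set.Iic ybar, ∀ c ∈ D, op₁ a c ∈ Set.Iic ybar)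
    (hop₁_mono : Mono2On op₁ (Set.Iic ybar) D)
    (hop₁_bd : op₁ (φ₁ ybar) (sSup D) ≤ φ₁ ybar)
    (hop₂_maps : ∀ a ∈ Set.Iic ybar, ∀ c ∈ D, op₂ a c ∈ Set.Iic ybar)
    (hop₂_mono : Mono2On op₂ (Set.Iic ybar) D)
    (hop₂_bd : op₂ (φ₂ ybar) (sSup D) ≤ φ₂ ybar)
    (hop₃_maps : ∀ a ∈ Set.Iic ybar, ∀ c ∈ D, op₃ a c ∈ Set.Iic ybar)
    (hop₃_mono : Mono2On op₃ (Set.Iic ybar) D)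
    (hop₃_bd : op₃ (φ₃ ybar) (sSup D) ≤ φ₃ ybar) :
    (∀ a ∈ Set.Iic k, ∀ b ∈ Set.Iic k, ∀ c ∈ D, ∀ d ∈ D,
      bot (ψ₂ (op₂ (φ₂ a) c)) (ψ₃ (op₃ (φ₃ b) d)) ≤
        ψ₁ (op₁ (φ₁ (star a b)) (min c d)))
    ↔
    (∀ a ∈ Set.Iic k, ∀ b ∈ Set.Iic k, ∀ c ∈ D,
      max (bot (ψ₂ (op₂ (φ₂ a) c)) (ψ₃ (op₃ (φ₃ b) (sSup D))))
          (bot (ψ₂ (op₂ (φ₂ a) (sSup D))) (ψ₃ (op₃ (φ₃ b) c)))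
        ≤ ψ₁ (op₁ (φ₁ (star a b)) c)) := by
  have hsup : ∀ c ∈ D, c ≤ sSup D := fun c hc => le_sSup hc
  constructor
  · intro h1 a ha b hb c hc
    have h1' := h1 a ha b hb c hc (sSup D) hD
    have h2' := h1 a ha b hb (sSup D) hD c hc
    rw [min_eq_left (hsup c hc)] at h1'
    rw [min_eq_right (hsup c hc)] at h2'
    exact max_le h1' h2'
  · intro h2 a ha b hb c hc d hd
    have key := h2 a ha b hb
    have hay : a ∈ Set.Iic ybar := le_trans ha hky
    have hby : b ∈ Set.Iic ybar := le_trans hb hky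
    have hφ2a : φ₂ a ∈ Set.Iic ybar := hφ₂_maps hay
    have hφ3b : φ₃ b ∈ Set.Iic ybar := hφ₃_maps hby
    have hyy : ybar ∈ Set.Iic ybar := Set.mem_Iic.mpr le_rfl
    have hφ2le : φ₂ a ≤ φ₂ ybar := hφ₂_mono hay hyy hay
    have hφ3le : φ₃ b ≤ φ₃ ybar := hφ₃_mono hby hyy hby
    have hop2le : ∀ e ∈ D, op₂ (φ₂ a) e ≤ φ₂ ybar := fun e he =>
      le_trans (hop₂_mono hφ2a he (hφ₂_maps hyy) hD hφ2le (hsup e he)) hop₂_bd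
    have hop3le : ∀ e ∈ D, op₃ (φ₃ b) e ≤ φ₃ ybar := fun e he =>
      le_trans (hop₃_mono hφ3b he (hφ₃_maps hyy) hD hφ3le (hsup e he)) hop₃_bd
    rcases le_total c d with hcd | hdc
    · rw [min_eq_left hcd]
      refine le_trans ?_ (le_trans (le_max_left _ _) (key c hc))
      apply hbot_mono (hψ₂_maps (hop2le c hc)) (hψ₃_maps (hop3le d hd))
        (hψ₂_maps (hop2le c hc)) (hψ₃_maps (hop3le (sSup D) hD)) le_rfl
      exact hψ₃_mono (hop3le d hd) (hop3le (sSup D) hD)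
        (hop₃_mono hφ3b hd hφ3b hD le_rfl (hsup d hd))
    · rw [min_eq_right hdc]
      refine le_trans ?_ (le_trans (le_max_right _ _) (key d hd))
      apply hbot_mono (hψ₂_maps (hop2le c hc)) (hψ₃_maps (hop3le d hd))
        (hψ₂_maps (hop2le (sSup D) hD)) (hψ₃_maps (hop3le d hd)) ?_ le_rfl
      exact hψ₂_mono (hop2le c hc) (hop2le (sSup D) hD)
        (hop₂_mono hφ2a hc hφ2a hD le_rfl (hsup c hc))
end

section
/- Let ⊗ : [0,1]² → [0,1] be a fuzzy conjunction and ⋆ : [0,1]² → [0,1] be nondecreasing and left-continuous with 1 ⋆ 0 = 0 = 0 ⋆ 1. For i=1,2,3 let φᵢ : [0,1] → [0,1] be continuous and increasing with φᵢ(0)=0 and 1 ⊗ φᵢ(1) ≤ φᵢ(1). Then the following are equivalent: (i) φ₁⁻¹(a ⊗ φ₁(b⋆c)) ≥ max( φ₂⁻¹(a ⊗ φ₂(b)) ⋆ φ₃⁻¹(1 ⊗ φ₃(c)), φ₂⁻¹(1 ⊗ φ₂(b)) ⋆ φ₃⁻¹(a ⊗ φ₃(c)) ) for all a,b,c ∈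 [0,1]; (ii) φ₁⁻¹(∫_m^⊗ φ₁(f⋆g)) ≥ φ₂⁻¹(∫_m^⊗ φ₂(f)) ⋆ φ₃⁻¹(∫_m^⊗ φ₃(g)) for every capacity m on any measurable space (X,𝒜) and all f,g ∈ F^1 comonotone on X. Here φᵢ⁻¹ denotes the inverse of φᵢ on its range [0,φᵢ(1)]. -/
open Set ENNReal

/-!
(ii) ⇒ (i): on `Bool`, let `m` take the value `a` on `{true}`. The q-integral of `b · 1_{true}` is
`a ⊗ b` and that of the constant `c` is `1 ⊗ c`, so (ii) for the pairs `(b · 1_{true}, c)` and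
`(b, c · 1_{true})` gives the two halves of the maximum.

(i) ⇒ (ii): the substitution `t = φ s` turns `∫^⊗ φ ∘ k` into `⨆ s, m {k ≥ s} ⊗ φ s`, and `φ⁻¹`
commutes with this supremum. By left-continuity of `⋆` it suffices to bound the term of a single
pair of levels `(α, β)`. Comonotonicity makes `{f ≥ α}` and `{g ≥ β}` nested, so the smaller one
lies in `{f ⋆ g ≥ α ⋆ β}`. Enlarging the capacity of the larger one to `1` and applying (i) with
`a` the capacity of the smaller one bounds the term by `φ₁⁻¹ (m {f ⋆ g ≥ α ⋆ β} ⊗ φ₁ (α ⋆ β))`.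
-/

structure IsScale (φ : ℝ≥0∞ → ℝ≥0∞) : Prop where
  mapsTo : MapsTo φ (Iic 1) (Iic 1)
  continuousOn : ContinuousOn φ (Iic 1)
  strictMonoOn : StrictMonoOn φ (Iic 1)
  map_zero : φ 0 = 0

namespace Mono2On

variable {op : ℝ≥0∞ → ℝ≥0∞ → ℝ≥0∞} {a₁ a₂ b₁ b₂ : ℝ≥0∞}

lemma apply_le_apply (h : Mono2On op (Iic 1) (Iic 1)) (ha₂ : a₂ ≤ 1) (hb₂ : b₂ ≤ 1)
    (ha : a₁ ≤ a₂) (hb : b₁ ≤ b₂) : op a₁ b₁ ≤ op a₂ b₂ :=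
  h (ha.trans ha₂) (hb.trans hb₂) ha₂ hb₂ ha hb

lemma eq_zero_of_le (h : Mono2On op (Iic 1) (Iic 1)) (h₀ : op a₂ b₂ = 0) (ha₂ : a₂ ≤ 1)
    (hb₂ : b₂ ≤ 1) (ha : a₁ ≤ a₂) (hb : b₁ ≤ b₂) : op a₁ b₁ = 0 :=
  nonpos_iff_eq_zero.1 (h₀ ▸ h.apply_le_apply ha₂ hb₂ ha hb)

end Mono2On

namespace IsScale

variable {φ ψ : ℝ≥0∞ → ℝ≥0∞} {oti : ℝ≥0∞ → ℝ≥0∞ → ℝ≥0∞} {a a' s x y y' : ℝ≥0∞}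

lemma le_iff_le (hφ : IsScale φ) (hx : x ≤ 1) (hy : y ≤ 1) : φ x ≤ φ y ↔ x ≤ y :=
  hφ.strictMonoOn.le_iff_le hx hy

lemma le_apply_one (hφ : IsScale φ) (hx : x ≤ 1) : φ x ≤ φ 1 :=
  (hφ.le_iff_le hx le_rfl).2 hx

lemma exists_apply_eq (hφ : IsScale φ) (hy : y ≤ φ 1) : ∃ x ≤ 1, φ x = y := by
  have hIcc : Icc (0 : ℝ≥0∞) 1 = Iic 1 := Icc_bot
  obtain ⟨x, hx, rfl⟩ := intermediate_value_Icc zero_le_one (hIcc ▸ hφ.continuousOn)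
    ⟨hφ.map_zero.trans_le zero_le, hy⟩
  exact ⟨x, hx.2, rfl⟩

lemma inv_le_one (hφ : IsScale φ) (hψ : LeftInvOn ψ φ (Iic 1)) (hy : y ≤ φ 1) : ψ y ≤ 1 := by
  obtain ⟨x, hx, rfl⟩ := hφ.exists_apply_eq hy
  rwa [hψ hx]

lemma apply_inv (hφ : IsScale φ) (hψ : LeftInvOn ψ φ (Iic 1)) (hy : y ≤ φ 1) : φ (ψ y) = y := by
  obtain ⟨x, hx, rfl⟩ := hφ.exists_apply_eq hy
  rw [hψ hx]

lemma inv_le_inv (hφ : IsScale φ) (hψ : LeftInvOn ψ φ (Iic 1)) (hy' : y' ≤ φ 1) (h : y ≤ y') :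
    ψ y ≤ ψ y' := by
  have hy : y ≤ φ 1 := h.trans hy'
  rwa [← hφ.le_iff_le (hφ.inv_le_one hψ hy) (hφ.inv_le_one hψ hy'), hφ.apply_inv hψ hy,
    hφ.apply_inv hψ hy']

lemma inv_iSup (hφ : IsScale φ) (hψ : LeftInvOn ψ φ (Iic 1)) {ι : Sort*} {A : ι → ℝ≥0∞}
    (hA : ∀ i, A i ≤ φ 1) : ψ (⨆ i, A i) = ⨆ i, ψ (A i) := by
  have hS : ⨆ i, A i ≤ φ 1 := iSup_le hA
  have hV : ⨆ i, ψ (A i) ≤ 1 := iSup_le fun i => hφ.inv_le_one hψ (hA i)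
  refine le_antisymm ?_ (iSup_le fun i => hφ.inv_le_inv hψ hS (le_iSup A i))
  rw [← hφ.le_iff_le (hφ.inv_le_one hψ hS) hV, hφ.apply_inv hψ hS]
  refine iSup_le fun i => ?_
  rw [← hφ.apply_inv hψ (hA i), hφ.le_iff_le (hφ.inv_le_one hψ (hA i)) hV]
  exact le_iSup (fun i => ψ (A i)) i

lemma inv_biSup (hφ : IsScale φ) (hψ : LeftInvOn ψ φ (Iic 1)) {ι : Type*} {t : Set ι}
    {A : ι → ℝ≥0∞} (hA : ∀ i ∈ t, A i ≤ φ 1) : ψ (⨆ i ∈ t, A i) = ⨆ i ∈ t, ψ (A i) :=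
  (hφ.inv_iSup hψ fun i => iSup_le (hA i)).trans (iSup_congr fun i => hφ.inv_iSup hψ (hA i))

lemma oti_apply_le (hφ : IsScale φ) (hoti : Mono2On oti (Iic 1) (Iic 1))
    (hbd : oti 1 (φ 1) ≤ φ 1) (ha : a ≤ 1) (hs : s ≤ 1) : oti a (φ s) ≤ φ 1 :=
  (hoti.apply_le_apply le_rfl (hφ.mapsTo self_mem_Iic) ha (hφ.le_apply_one hs)).trans hbd

lemma inv_oti_le_one (hφ : IsScale φ) (hψ : LeftInvOn ψ φ (Iic 1))
    (hoti : Mono2On oti (Iic 1) (Iic 1)) (hbd : oti 1 (φ 1) ≤ φ 1) (ha : a ≤ 1) (hs : s ≤ 1) :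
    ψ (oti a (φ s)) ≤ 1 :=
  hφ.inv_le_one hψ (hφ.oti_apply_le hoti hbd ha hs)

lemma inv_oti_le_inv_oti (hφ : IsScale φ) (hψ : LeftInvOn ψ φ (Iic 1))
    (hoti : Mono2On oti (Iic 1) (Iic 1)) (hbd : oti 1 (φ 1) ≤ φ 1) (hs : s ≤ 1) (ha' : a' ≤ 1)
    (h : a ≤ a') : ψ (oti a (φ s)) ≤ ψ (oti a' (φ s)) :=
  hφ.inv_le_inv hψ (hφ.oti_apply_le hoti hbd ha' hs)
    (hoti.apply_le_apply ha' (hφ.mapsTo hs) h le_rfl)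

end IsScale

lemma IsCapacity.le_one {X : Type*} [MeasurableSpace X] {m : Set X → ℝ≥0∞} (hm : IsCapacity m)
    {A : Set X} (hA : MeasurableSet A) : m A ≤ 1 :=
  hm.2.1 ▸ hm.2.2 hA MeasurableSet.univ (subset_univ A)

section qInt

variable {X : Type*} {oti : ℝ≥0∞ → ℝ≥0∞ → ℝ≥0∞} {m : Set X → ℝ≥0∞} {φ ψ : ℝ≥0∞ → ℝ≥0∞}

lemma qInt_comp_eq_biSup (hm0 : m ∅ = 0) (hoti : Mono2On oti (Iic 1) (Iic 1))
    (hoti01 : oti 0 1 = 0) (hφ : IsScale φ) {k : X → ℝ≥0∞} (hk : ∀ x, k x ≤ 1) :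
    qInt oti m (fun x => φ (k x)) = ⨆ s ∈ Iic (1 : ℝ≥0∞), oti (m {x | s ≤ k x}) (φ s) := by
  have hlevel : ∀ s ≤ 1, {x | φ s ≤ φ (k x)} = {x | s ≤ k x} := fun s hs => by
    ext x; exact hφ.le_iff_le hs (hk x)
  refine le_antisymm (iSup₂_le fun t ht => ?_) (iSup₂_le fun s hs => ?_)
  · rcases le_or_gt t (φ 1) with htφ | htφ
    · obtain ⟨s, hs, rfl⟩ := hφ.exists_apply_eq htφ
      rw [hlevel s hs]
      exact le_iSup₂_of_le s hs le_rfl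
    · have hempty : {x | t ≤ φ (k x)} = ∅ :=
        eq_empty_of_forall_notMem fun x hx => (hφ.le_apply_one (hk x)).not_gt (htφ.trans_le hx)
      rw [hempty, hm0, hoti.eq_zero_of_le hoti01 zero_le le_rfl le_rfl ht]
      exact zero_le
  · exact le_iSup₂_of_le (φ s) (hφ.mapsTo hs) (by rw [hlevel s hs])

lemma IsScale.inv_qInt_comp_eq_biSup [MeasurableSpace X] (hφ : IsScale φ)
    (hψ : LeftInvOn ψ φ (Iic 1)) (hoti : Mono2On oti (Iic 1) (Iic 1)) (hoti01 : oti 0 1 = 0)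
    (hbd : oti 1 (φ 1) ≤ φ 1) (hm : IsCapacity m) {k : X → ℝ≥0∞} (hk_meas : Measurable k)
    (hk : ∀ x, k x ≤ 1) :
    ψ (qInt oti m fun x => φ (k x)) = ⨆ s ∈ Iic (1 : ℝ≥0∞), ψ (oti (m {x | s ≤ k x}) (φ s)) := by
  rw [qInt_comp_eq_biSup hm.1 hoti hoti01 hφ hk]
  exact hφ.inv_biSup hψ fun s hs =>
    hφ.oti_apply_le hoti hbd (hm.le_one (hk_meas measurableSet_Ici)) hs

lemma qInt_indicator (hm0 : m ∅ = 0) (hm1 : m univ = 1) (hoti : Mono2On oti (Iic 1) (Iic 1))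
    (hoti01 : oti 0 1 = 0) (hoti10 : oti 1 0 = 0) {E : Set X} (hE : m E ≤ 1) {p : ℝ≥0∞}
    (hp : p ≤ 1) : qInt oti m (E.indicator fun _ => p) = oti (m E) p := by
  have hlevel : ∀ t ≠ 0, {x | t ≤ E.indicator (fun _ => p) x} = if t ≤ p then E else ∅ := by
    intro t ht
    ext x
    by_cases hx : x ∈ E <;> by_cases htp : t ≤ p <;> simp [hx, htp, ht]
  refine le_antisymm (iSup₂_le fun t ht => ?_) ?_
  · rcases eq_or_ne t 0 with rfl | ht0
    · simp only [zero_le, ofPred_true, hm1, hoti10]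
    rw [hlevel t ht0]
    split_ifs with htp
    · exact hoti.apply_le_apply hE hp le_rfl htp
    · rw [hm0, hoti.eq_zero_of_le hoti01 zero_le le_rfl le_rfl ht]
      exact zero_le
  · rcases eq_or_ne p 0 with rfl | hp0
    · rw [hoti.eq_zero_of_le hoti10 le_rfl zero_le hE le_rfl]
      exact zero_le
    · exact le_iSup₂_of_le p hp (by rw [hlevel p hp0, if_pos le_rfl])

lemma qInt_const (hm0 : m ∅ = 0) (hm1 : m univ = 1) (hoti : Mono2On oti (Iic 1) (Iic 1))
    (hoti01 : oti 0 1 = 0) (hoti10 : oti 1 0 = 0) {p : ℝ≥0∞} (hp : p ≤ 1) :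
    qInt oti m (fun _ => p) = oti 1 p := by
  simpa [hm1] using qInt_indicator hm0 hm1 hoti hoti01 hoti10 hm1.le hp

end qInt

lemma Measurable.measurableSet_of_forall_le_mem {Y α : Type*} [MeasurableSpace Y]
    [TopologicalSpace α] [LinearOrder α] [OrderTopology α] [SecondCountableTopology α]
    [MeasurableSpace α] [OpensMeasurableSpace α] {c : Y → α} (hc : Measurable c) {T : Set Y} (hT : ∀ x ∈ T, ∀ y, c x ≤ c y → y ∈ T) :
    MeasurableSet T := by
  have hU : IsUpperSet {z | ∃ x ∈ T, c x ≤ z} := fun _ _ hzw ⟨x, hx, hxz⟩ => ⟨x, hx, hxz.trans hzw⟩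
  have hT_eq : T = c ⁻¹' {z | ∃ x ∈ T, c x ≤ z} :=
    ext fun y => ⟨fun hy => ⟨y, hy, le_rfl⟩, fun ⟨x, hx, hxy⟩ => hT x hx y hxy⟩
  rw [hT_eq]
  exact hc hU.ordConnected.measurableSet

namespace ComonotoneOn

variable {X : Type*} {f g : X → ℝ≥0∞}

lemma setOf_le_subset_or_subset (h : ComonotoneOn univ f g) (α β : ℝ≥0∞) :
    {x | α ≤ f x} ⊆ {x | β ≤ g x} ∨ {x | β ≤ g x} ⊆ {x | α ≤ f x} := by
  refine or_iff_not_imp_left.2 fun hsub y (hy : β ≤ g y) => ?_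
  obtain ⟨x, hfx : α ≤ f x, hgx : ¬β ≤ g x⟩ := not_subset.1 hsub
  exact hfx.trans (le_of_not_gt fun hlt => hgx (hy.trans (h y trivial x trivial hlt)))

lemma le_and_le_of_add_le (h : ComonotoneOn univ f g) {x y : X} (hfy : f y ≠ ∞) (hgy : g y ≠ ∞)
    (hxy : f x + g x ≤ f y + g y) : f x ≤ f y ∧ g x ≤ g y := by
  refine ⟨le_of_not_gt fun hf => ?_, le_of_not_gt fun hg => ?_⟩
  · exact hxy.not_gt (ENNReal.add_lt_add_of_lt_of_le hgy hf (h y trivial x trivial hf))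
  · have hf : f y ≤ f x := le_of_not_gt fun hf => (h x trivial y trivial hf).not_gt hg
    exact hxy.not_gt (ENNReal.add_lt_add_of_le_of_lt hfy hf hg)

lemma measurable_apply [MeasurableSpace X] (h : ComonotoneOn univ f g)
    {op : ℝ≥0∞ → ℝ≥0∞ → ℝ≥0∞} (hop : Mono2On op (Iic 1) (Iic 1)) (hf : Measurable f)
    (hg : Measurable g) (hf1 : ∀ x, f x ≤ 1) (hg1 : ∀ x, g x ≤ 1) :
    Measurable fun x => op (f x) (g x) := by
  refine measurable_of_Ici fun r => (hf.add hg).measurableSet_of_forall_le_mem ?_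
  intro x (hx : r ≤ op (f x) (g x)) y hxy
  obtain ⟨hfxy, hgxy⟩ :=
    h.le_and_le_of_add_le ((hf1 y).trans_lt one_lt_top).ne ((hg1 y).trans_lt one_lt_top).ne hxy
  exact hx.trans (hop.apply_le_apply (hf1 y) (hg1 y) hfxy hgxy)

end ComonotoneOn

lemma LeftCont2On.apply_sSup_sSup_le {op : ℝ≥0∞ → ℝ≥0∞ → ℝ≥0∞}
    (hlc : LeftCont2On op (Iic 1) (Iic 1)) (hop : Mono2On op (Iic 1) (Iic 1)) {S T : Set ℝ≥0∞}
    (hS : S ⊆ Iic 1) (hT : T ⊆ Iic 1) (hSne : S.Nonempty) (hTne : T.Nonempty) {r : ℝ≥0∞}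
    (h : ∀ a ∈ S, ∀ b ∈ T, op a b ≤ r) : op (sSup S) (sSup T) ≤ r := by
  have hS1 : sSup S ≤ 1 := sSup_le hS
  have hT1 : sSup T ≤ 1 := sSup_le hT
  rw [MonotoneOn.map_csSup_of_continuousWithinAt ((hlc.1 _ hT1 _ hS1).mono fun a => le_sSup)
    (fun a _ a' ha' haa' => hop.apply_le_apply (hS ha') hT1 haa' le_rfl) hSne]
  refine sSup_le (forall_mem_image.2 fun a ha => ?_)
  rw [MonotoneOn.map_csSup_of_continuousWithinAt ((hlc.2 _ (hS ha) _ hT1).mono fun b => le_sSup)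
    (fun b _ b' hb' hbb' => hop.apply_le_apply (hS ha) (hT hb') le_rfl hbb') hTne]
  exact sSup_le (forall_mem_image.2 fun b hb => h a ha b hb)

lemma Mono2On.apply_le_of_max_le {G : ℝ≥0∞ → ℝ≥0∞ → ℝ≥0∞} {H : ℝ≥0∞ → ℝ≥0∞}
    (hG : Mono2On G (Iic 1) (Iic 1)) (hH : MonotoneOn H (Iic 1))
    (hGH : ∀ a ≤ 1, max (G a 1) (G 1 a) ≤ H a) {a a' c : ℝ≥0∞} (ha : a ≤ 1) (ha' : a' ≤ 1)
    (hc : c ≤ 1) (h : a ≤ c ∨ a' ≤ c) : G a a' ≤ H c := by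
  rcases h with h | h
  · calc G a a' ≤ G a 1 := hG.apply_le_apply ha le_rfl le_rfl ha'
      _ ≤ H a := (le_max_left _ _).trans (hGH a ha)
      _ ≤ H c := hH ha hc h
  · calc G a a' ≤ G 1 a' := hG.apply_le_apply le_rfl ha' ha le_rfl
      _ ≤ H a' := (le_max_right _ _).trans (hGH a' ha')
      _ ≤ H c := hH ha' hc h

theorem qInt_star_le_of_pointwise {Y : Type*} [MeasurableSpace Y]
    {oti star : ℝ≥0∞ → ℝ≥0∞ → ℝ≥0∞} {φ₁ φ₂ φ₃ ψ₁ ψ₂ ψ₃ : ℝ≥0∞ → ℝ≥0∞}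
    (hoti : Mono2On oti (Iic 1) (Iic 1)) (hoti01 : oti 0 1 = 0)
    (hstar_maps : ∀ a ∈ Iic (1 : ℝ≥0∞), ∀ b ∈ Iic (1 : ℝ≥0∞), star a b ∈ Iic 1)
    (hstar : Mono2On star (Iic 1) (Iic 1)) (hstar_lc : LeftCont2On star (Iic 1) (Iic 1))
    (hφ₁ : IsScale φ₁) (hφ₂ : IsScale φ₂) (hφ₃ : IsScale φ₃)
    (hψ₁ : LeftInvOn ψ₁ φ₁ (Iic 1)) (hψ₂ : LeftInvOn ψ₂ φ₂ (Iic 1))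
    (hψ₃ : LeftInvOn ψ₃ φ₃ (Iic 1)) (hbd₁ : oti 1 (φ₁ 1) ≤ φ₁ 1)
    (hbd₂ : oti 1 (φ₂ 1) ≤ φ₂ 1) (hbd₃ : oti 1 (φ₃ 1) ≤ φ₃ 1)
    (hi : ∀ a ∈ Iic (1 : ℝ≥0∞), ∀ b ∈ Iic (1 : ℝ≥0∞), ∀ c ∈ Iic (1 : ℝ≥0∞),
      max (star (ψ₂ (oti a (φ₂ b))) (ψ₃ (oti 1 (φ₃ c))))
          (star (ψ₂ (oti 1 (φ₂ b))) (ψ₃ (oti a (φ₃ c))))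
        ≤ ψ₁ (oti a (φ₁ (star b c))))
    {m : Set Y → ℝ≥0∞} (hm : IsCapacity m) {f g : Y → ℝ≥0∞} (hf : Measurable f)
    (hg : Measurable g) (hf1 : ∀ x, f x ≤ 1) (hg1 : ∀ x, g x ≤ 1)
    (hcom : ComonotoneOn univ f g) :
    star (ψ₂ (qInt oti m fun x => φ₂ (f x))) (ψ₃ (qInt oti m fun x => φ₃ (g x)))
      ≤ ψ₁ (qInt oti m fun x => φ₁ (star (f x) (g x))) := by
  have hfg : Measurable fun x => star (f x) (g x) := hcom.measurable_apply hstar hf hg hf1 hg1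
  rw [hφ₁.inv_qInt_comp_eq_biSup hψ₁ hoti hoti01 hbd₁ hm hfg
      fun x => hstar_maps _ (hf1 x) _ (hg1 x),
    hφ₂.inv_qInt_comp_eq_biSup hψ₂ hoti hoti01 hbd₂ hm hf hf1,
    hφ₃.inv_qInt_comp_eq_biSup hψ₃ hoti hoti01 hbd₃ hm hg hg1, ← sSup_image, ← sSup_image]
  refine hstar_lc.apply_sSup_sSup_le hstar (image_subset_iff.2 fun α hα => ?_)
    (image_subset_iff.2 fun β hβ => ?_) (nonempty_Iic.image _) (nonempty_Iic.image _) ?_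
  · exact hφ₂.inv_oti_le_one hψ₂ hoti hbd₂ (hm.le_one (hf measurableSet_Ici)) hα
  · exact hφ₃.inv_oti_le_one hψ₃ hoti hbd₃ (hm.le_one (hg measurableSet_Ici)) hβ
  rintro _ ⟨α, hα, rfl⟩ _ ⟨β, hβ, rfl⟩
  have hαβ : star α β ≤ 1 := hstar_maps α hα β hβ
  have hG : Mono2On (fun a a' => star (ψ₂ (oti a (φ₂ α))) (ψ₃ (oti a' (φ₃ β)))) (Iic 1) (Iic 1) :=
    fun _ _ _ _ a₂ ha₂ a₂' ha₂' h h' => hstar.apply_le_apply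
      (hφ₂.inv_oti_le_one hψ₂ hoti hbd₂ ha₂ hα) (hφ₃.inv_oti_le_one hψ₃ hoti hbd₃ ha₂' hβ)
      (hφ₂.inv_oti_le_inv_oti hψ₂ hoti hbd₂ hα ha₂ h)
      (hφ₃.inv_oti_le_inv_oti hψ₃ hoti hbd₃ hβ ha₂' h')
  have hH : MonotoneOn (fun a => ψ₁ (oti a (φ₁ (star α β)))) (Iic 1) :=
    fun _ _ _ ha' h => hφ₁.inv_oti_le_inv_oti hψ₁ hoti hbd₁ hαβ ha' h
  have hnested : m {x | α ≤ f x} ≤ m {x | star α β ≤ star (f x) (g x)} ∨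
      m {x | β ≤ g x} ≤ m {x | star α β ≤ star (f x) (g x)} :=
    (hcom.setOf_le_subset_or_subset α β).imp
      (fun h => hm.2.2 (hf measurableSet_Ici) (hfg measurableSet_Ici) fun x hx =>
        hstar.apply_le_apply (hf1 x) (hg1 x) hx (h hx))
      (fun h => hm.2.2 (hg measurableSet_Ici) (hfg measurableSet_Ici) fun x hx =>
        hstar.apply_le_apply (hf1 x) (hg1 x) (h hx) hx)
  exact le_iSup₂_of_le (star α β) hαβ <| hG.apply_le_of_max_le hH
    (fun a ha => hi a ha α hα β hβ) (hm.le_one (hf measurableSet_Ici))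
    (hm.le_one (hg measurableSet_Ici)) (hm.le_one (hfg measurableSet_Ici)) hnested

open Classical in
noncomputable def pointCapacity {X : Type*} (x₀ : X) (a : ℝ≥0∞) (S : Set X) : ℝ≥0∞ :=
  if S = univ then 1 else if x₀ ∈ S then a else 0

lemma isCapacity_pointCapacity {X : Type*} [MeasurableSpace X] (x₀ : X) {a : ℝ≥0∞}
    (ha : a ≤ 1) : IsCapacity (pointCapacity x₀ a) := by
  refine ⟨?_, if_pos rfl, fun A B _ _ hAB => ?_⟩
  · simp [pointCapacity, (nonempty_of_mem (mem_univ x₀)).ne_empty.symm]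
  unfold pointCapacity
  by_cases hB : B = univ
  · rw [if_pos hB]
    split_ifs <;> simp [ha]
  have hA : A ≠ univ := fun hA => hB (univ_subset_iff.1 (hA ▸ hAB))
  rw [if_neg hA, if_neg hB]
  by_cases hx₀A : x₀ ∈ A
  · rw [if_pos hx₀A, if_pos (hAB hx₀A)]
  · rw [if_neg hx₀A]
    exact zero_le

lemma pointCapacity_of_mem {X : Type*} {x₀ : X} {a : ℝ≥0∞} {S : Set X} (hx₀ : x₀ ∈ S)
    (hS : S ≠ univ) : pointCapacity x₀ a S = a := by
  simp [pointCapacity, hS, hx₀]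

theorem pointwise_of_qInt_star_le {oti star : ℝ≥0∞ → ℝ≥0∞ → ℝ≥0∞}
    {φ₁ φ₂ φ₃ ψ₁ ψ₂ ψ₃ : ℝ≥0∞ → ℝ≥0∞} (hoti : Mono2On oti (Iic 1) (Iic 1))
    (hoti01 : oti 0 1 = 0) (hoti10 : oti 1 0 = 0)
    (hstar_maps : ∀ a ∈ Iic (1 : ℝ≥0∞), ∀ b ∈ Iic (1 : ℝ≥0∞), star a b ∈ Iic 1)
    (hstar : Mono2On star (Iic 1) (Iic 1)) (hstar10 : star 1 0 = 0) (hstar01 : star 0 1 = 0)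
    (hφ₁_maps : MapsTo φ₁ (Iic 1) (Iic 1)) (hφ₂_maps : MapsTo φ₂ (Iic 1) (Iic 1))
    (hφ₃_maps : MapsTo φ₃ (Iic 1) (Iic 1)) (hφ₁0 : φ₁ 0 = 0) (hφ₂0 : φ₂ 0 = 0) (hφ₃0 : φ₃ 0 = 0)
    (hii : ∀ (Y : Type) [MeasurableSpace Y], ∀ m : Set Y → ℝ≥0∞, IsCapacity m →
      ∀ f g : Y → ℝ≥0∞, Measurable f → Measurable g →
        (∀ x, f x ≤ 1) → (∀ x, g x ≤ 1) → ComonotoneOn Set.univ f g →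
          star (ψ₂ (qInt oti m fun x => φ₂ (f x))) (ψ₃ (qInt oti m fun x => φ₃ (g x)))
            ≤ ψ₁ (qInt oti m fun x => φ₁ (star (f x) (g x))))
    (a : ℝ≥0∞) (ha : a ≤ 1) (b : ℝ≥0∞) (hb : b ≤ 1) (c : ℝ≥0∞) (hc : c ≤ 1) :
    max (star (ψ₂ (oti a (φ₂ b))) (ψ₃ (oti 1 (φ₃ c))))
        (star (ψ₂ (oti 1 (φ₂ b))) (ψ₃ (oti a (φ₃ c))))
      ≤ ψ₁ (oti a (φ₁ (star b c))) := by
  set m := pointCapacity true a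
  set E : Set Bool := {true}
  have hm : IsCapacity m := isCapacity_pointCapacity true ha
  have hmE : m E = a := pointCapacity_of_mem rfl fun h => absurd (h ▸ mem_univ false) (by simp [E])
  have hind : ∀ {h : ℝ≥0∞ → ℝ≥0∞} {p : ℝ≥0∞}, h 0 = 0 → h p ≤ 1 →
      qInt oti m (fun x => h (E.indicator (fun _ => p) x)) = oti a (h p) := fun h0 hp => by
    rw [← hmE, ← qInt_indicator hm.1 hm.2.1 hoti hoti01 hoti10 (hmE.trans_le ha) hp]
    exact congrArg (qInt oti m) (indicator_comp_of_zero h0).symm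
  have hconst : ∀ {p : ℝ≥0∞}, p ≤ 1 → qInt oti m (fun _ => p) = oti 1 p :=
    qInt_const hm.1 hm.2.1 hoti hoti01 hoti10
  have hbc : φ₁ (star b c) ≤ 1 := hφ₁_maps (hstar_maps b hb c hc)
  have hE_le : ∀ {p : ℝ≥0∞}, p ≤ 1 → ∀ x, E.indicator (fun _ => p) x ≤ 1 :=
    fun hp x => (indicator_le_self' (fun _ _ => zero_le) x).trans hp
  refine max_le ?_ ?_
  · have := hii Bool m hm (E.indicator fun _ => b) (fun _ => c) (measurable_of_finite _)
      measurable_const (hE_le hb) (fun _ => hc) (fun _ _ _ _ _ => le_rfl)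
    rwa [hind hφ₂0 (hφ₂_maps hb), hconst (hφ₃_maps hc), hind (h := fun u => φ₁ (star u c))
      (by rw [hstar.eq_zero_of_le hstar01 zero_le le_rfl le_rfl hc, hφ₁0]) hbc] at this
  · have := hii Bool m hm (fun _ => b) (E.indicator fun _ => c) measurable_const
      (measurable_of_finite _) (fun _ => hb) (hE_le hc) (fun _ _ _ _ h => (lt_irrefl _ h).elim)
    rwa [hconst (hφ₂_maps hb), hind hφ₃0 (hφ₃_maps hc), hind (h := fun u => φ₁ (star b u))
      (by rw [hstar.eq_zero_of_le hstar10 le_rfl zero_le hb le_rfl, hφ₁0]) hbc] at this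

theorem statement6_general
    (oti star : ℝ≥0∞ → ℝ≥0∞ → ℝ≥0∞)
    (hoti_mono : Mono2On oti (Set.Iic 1) (Set.Iic 1))
    (hoti_zero : oti 0 1 = 0 ∧ oti 1 0 = 0 ∧ oti 0 0 = 0)
    (hstar_maps : ∀ a ∈ Set.Iic (1 : ℝ≥0∞), ∀ b ∈ Set.Iic (1 : ℝ≥0∞), star a b ∈ Set.Iic 1)
    (hstar_mono : Mono2On star (Set.Iic 1) (Set.Iic 1))
    (hstar_lc : LeftCont2On star (Set.Iic 1) (Set.Iic 1))
    (hstar_zero : star 1 0 = 0 ∧ star 0 1 = 0)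
    (φ₁ φ₂ φ₃ ψ₁ ψ₂ ψ₃ : ℝ≥0∞ → ℝ≥0∞)
    (hφ₁_maps : Set.MapsTo φ₁ (Set.Iic 1) (Set.Iic 1))
    (hφ₁_cont : ContinuousOn φ₁ (Set.Iic 1)) (hφ₁_mono : StrictMonoOn φ₁ (Set.Iic 1))
    (hφ₁_zero : φ₁ 0 = 0) (hφ₁_bd : oti 1 (φ₁ 1) ≤ φ₁ 1)
    (hφ₂_maps : Set.MapsTo φ₂ (Set.Iic 1) (Set.Iic 1))
    (hφ₂_cont : ContinuousOn φ₂ (Set.Iic 1)) (hφ₂_mono : StrictMonoOn φ₂ (Set.Iic 1))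
    (hφ₂_zero : φ₂ 0 = 0) (hφ₂_bd : oti 1 (φ₂ 1) ≤ φ₂ 1)
    (hφ₃_maps : Set.MapsTo φ₃ (Set.Iic 1) (Set.Iic 1))
    (hφ₃_cont : ContinuousOn φ₃ (Set.Iic 1)) (hφ₃_mono : StrictMonoOn φ₃ (Set.Iic 1))
    (hφ₃_zero : φ₃ 0 = 0) (hφ₃_bd : oti 1 (φ₃ 1) ≤ φ₃ 1)
    (hψ₁_inv : ∀ x ∈ Set.Iic (1 : ℝ≥0∞), ψ₁ (φ₁ x) = x)
    (hψ₂_inv : ∀ x ∈ Set.Iic (1 : ℝ≥0∞), ψ₂ (φ₂ x) = x)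
    (hψ₃_inv : ∀ x ∈ Set.Iic (1 : ℝ≥0∞), ψ₃ (φ₃ x) = x) :
    (∀ a ∈ Set.Iic (1 : ℝ≥0∞), ∀ b ∈ Set.Iic (1 : ℝ≥0∞), ∀ c ∈ Set.Iic (1 : ℝ≥0∞),
      max (star (ψ₂ (oti a (φ₂ b))) (ψ₃ (oti 1 (φ₃ c))))
          (star (ψ₂ (oti 1 (φ₂ b))) (ψ₃ (oti a (φ₃ c))))
        ≤ ψ₁ (oti a (φ₁ (star b c))))
    ↔
    (∀ (Y : Type) [MeasurableSpace Y], ∀ m : Set Y → ℝ≥0∞, IsCapacity m →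
      ∀ f g : Y → ℝ≥0∞, Measurable f → Measurable g →
        (∀ x, f x ≤ 1) → (∀ x, g x ≤ 1) → ComonotoneOn Set.univ f g →
          star (ψ₂ (qInt oti m fun x => φ₂ (f x))) (ψ₃ (qInt oti m fun x => φ₃ (g x)))
            ≤ ψ₁ (qInt oti m fun x => φ₁ (star (f x) (g x)))) := by
  have hφ₁ : IsScale φ₁ := ⟨hφ₁_maps, hφ₁_cont, hφ₁_mono, hφ₁_zero⟩
  have hφ₂ : IsScale φ₂ := ⟨hφ₂_maps, hφ₂_cont, hφ₂_mono, hφ₂_zero⟩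
  have hφ₃ : IsScale φ₃ := ⟨hφ₃_maps, hφ₃_cont, hφ₃_mono, hφ₃_zero⟩
  refine ⟨fun hi Y _ m hm f g hf hg hf1 hg1 hcom => ?_, fun hii a ha b hb c hc => ?_⟩
  · exact qInt_star_le_of_pointwise hoti_mono hoti_zero.1 hstar_maps hstar_mono hstar_lc
      hφ₁ hφ₂ hφ₃ hψ₁_inv hψ₂_inv hψ₃_inv hφ₁_bd hφ₂_bd hφ₃_bd hi hm hf hg hf1 hg1 hcom
  · exact pointwise_of_qInt_star_le hoti_mono hoti_zero.1 hoti_zero.2.1 hstar_maps hstar_mono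
      hstar_zero.1 hstar_zero.2 hφ₁_maps hφ₂_maps hφ₃_maps hφ₁_zero hφ₂_zero hφ₃_zero hii
      a ha b hb c hc

theorem statement6
    (oti star : ℝ≥0∞ → ℝ≥0∞ → ℝ≥0∞)
    (hoti_maps : ∀ a ∈ Set.Iic (1 : ℝ≥0∞), ∀ b ∈ Set.Iic (1 : ℝ≥0∞), oti a b ∈ Set.Iic 1)
    (hoti_mono : Mono2On oti (Set.Iic 1) (Set.Iic 1))
    (hoti_one : oti 1 1 = 1)
    (hoti_zero : oti 0 1 = 0 ∧ oti 1 0 = 0 ∧ oti 0 0 = 0)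
    (hstar_maps : ∀ a ∈ Set.Iic (1 : ℝ≥0∞), ∀ b ∈ Set.Iic (1 : ℝ≥0∞), star a b ∈ Set.Iic 1)
    (hstar_mono : Mono2On star (Set.Iic 1) (Set.Iic 1))
    (hstar_lc : LeftCont2On star (Set.Iic 1) (Set.Iic 1))
    (hstar_zero : star 1 0 = 0 ∧ star 0 1 = 0)
    (φ₁ φ₂ φ₃ ψ₁ ψ₂ ψ₃ : ℝ≥0∞ → ℝ≥0∞)
    (hφ₁_maps : Set.MapsTo φ₁ (Set.Iic 1) (Set.Iic 1))
    (hφ₁_cont : ContinuousOn φ₁ (Set.Iic 1)) (hφ₁_mono : StrictMonoOn φ₁ (Set.Iic 1))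
    (hφ₁_zero : φ₁ 0 = 0) (hφ₁_bd : oti 1 (φ₁ 1) ≤ φ₁ 1)
    (hφ₂_maps : Set.MapsTo φ₂ (Set.Iic 1) (Set.Iic 1))
    (hφ₂_cont : ContinuousOn φ₂ (Set.Iic 1)) (hφ₂_mono : StrictMonoOn φ₂ (Set.Iic 1))
    (hφ₂_zero : φ₂ 0 = 0) (hφ₂_bd : oti 1 (φ₂ 1) ≤ φ₂ 1)
    (hφ₃_maps : Set.MapsTo φ₃ (Set.Iic 1) (Set.Iic 1))
    (hφ₃_cont : ContinuousOn φ₃ (Set.Iic 1)) (hφ₃_mono : StrictMonoOn φ₃ (Set.Iic 1))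
    (hφ₃_zero : φ₃ 0 = 0) (hφ₃_bd : oti 1 (φ₃ 1) ≤ φ₃ 1)
    (hψ₁_inv : ∀ x ∈ Set.Iic (1 : ℝ≥0∞), ψ₁ (φ₁ x) = x)
    (hψ₁_inv' : ∀ y ∈ Set.Iic (φ₁ 1), φ₁ (ψ₁ y) = y)
    (hψ₂_inv : ∀ x ∈ Set.Iic (1 : ℝ≥0∞), ψ₂ (φ₂ x) = x)
    (hψ₂_inv' : ∀ y ∈ Set.Iic (φ₂ 1), φ₂ (ψ₂ y) = y)
    (hψ₃_inv : ∀ x ∈ Set.Iic (1 : ℝ≥0∞), ψ₃ (φ₃ x) = x)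
    (hψ₃_inv' : ∀ y ∈ Set.Iic (φ₃ 1), φ₃ (ψ₃ y) = y) :
    (∀ a ∈ Set.Iic (1 : ℝ≥0∞), ∀ b ∈ Set.Iic (1 : ℝ≥0∞), ∀ c ∈ Set.Iic (1 : ℝ≥0∞),
      max (star (ψ₂ (oti a (φ₂ b))) (ψ₃ (oti 1 (φ₃ c))))
          (star (ψ₂ (oti 1 (φ₂ b))) (ψ₃ (oti a (φ₃ c))))
        ≤ ψ₁ (oti a (φ₁ (star b c))))
    ↔
    (∀ (Y : Type) [MeasurableSpace Y], ∀ m : Set Y → ℝ≥0∞, IsCapacity m →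
      ∀ f g : Y → ℝ≥0∞, Measurable f → Measurable g →
        (∀ x, f x ≤ 1) → (∀ x, g x ≤ 1) → ComonotoneOn Set.univ f g →
          star (ψ₂ (qInt oti m fun x => φ₂ (f x))) (ψ₃ (qInt oti m fun x => φ₃ (g x)))
            ≤ ψ₁ (qInt oti m fun x => φ₁ (star (f x) (g x)))) :=
  statement6_general oti star hoti_mono hoti_zero hstar_maps hstar_mono hstar_lc hstar_zero φ₁ φ₂ φ₃
    ψ₁ ψ₂ ψ₃ hφ₁_maps hφ₁_cont hφ₁_mono hφ₁_zero hφ₁_bd hφ₂_maps hφ₂_cont hφ₂_mono hφ₂_zero hφ₂_bd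
    hφ₃_maps hφ₃_cont hφ₃_mono hφ₃_zero hφ₃_bd hψ₁_inv hψ₂_inv hψ₃_inv
end

section
/- Let ȳ ∈ (0,∞], D ⊆ [0,∞], and let ⋆ : [0,ȳ]² → [0,ȳ] be a nondecreasing binary operation with a ⋆ b ≤ min(a,b) for all a,b ∈ [0,ȳ]. Let φᵢ : [0,ȳ] → [0,ȳ] and ψᵢ : [0,φᵢ(ȳ)] → [0,ȳ] be nondecreasing for i=1,2,3, and assume φ₁(ȳ) = φ₂(ȳ) = φ₃(ȳ), ψ₁ ≥ ψ₂ and ψ₁ ≥ ψ₃ pointwise, and ψⱼ(φⱼ(x)) ≤ x ≤ ψ₁(φ₁(x)) for all x ∈ [0,ȳ] and j=2,3. Then ψ₁(min(φ₁(a⋆b), c, d)) ≥ ψ₂(min(φ₂(a), c)) ⋆ ψ₃(min(φ₃(b), d)) for all a,b ∈ [0,ȳ] and all c,d ∈ D. -/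
open Set ENNReal

theorem statement11 (ybar : ℝ≥0∞) (hybar : 0 < ybar) (D : Set ℝ≥0∞)
    (star : ℝ≥0∞ → ℝ≥0∞ → ℝ≥0∞)
    (hstar_maps : ∀ a ∈ Set.Iic ybar, ∀ b ∈ Set.Iic ybar, star a b ∈ Set.Iic ybar)
    (hstar_mono : Mono2On star (Set.Iic ybar) (Set.Iic ybar))
    (hstar_le : ∀ a ∈ Set.Iic ybar, ∀ b ∈ Set.Iic ybar, star a b ≤ min a b)
    (φ₁ φ₂ φ₃ ψ₁ ψ₂ ψ₃ : ℝ≥0∞ → ℝ≥0∞)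
    (hφ₁_maps : Set.MapsTo φ₁ (Set.Iic ybar) (Set.Iic ybar))
    (hφ₁_mono : MonotoneOn φ₁ (Set.Iic ybar))
    (hφ₂_maps : Set.MapsTo φ₂ (Set.Iic ybar) (Set.Iic ybar))
    (hφ₂_mono : MonotoneOn φ₂ (Set.Iic ybar))
    (hφ₃_maps : Set.MapsTo φ₃ (Set.Iic ybar) (Set.Iic ybar))
    (hφ₃_mono : MonotoneOn φ₃ (Set.Iic ybar))
    (hψ₁_maps : Set.MapsTo ψ₁ (Set.Iic (φ₁ ybar)) (Set.Iic ybar))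
    (hψ₁_mono : MonotoneOn ψ₁ (Set.Iic (φ₁ ybar)))
    (hψ₂_maps : Set.MapsTo ψ₂ (Set.Iic (φ₂ ybar)) (Set.Iic ybar))
    (hψ₂_mono : MonotoneOn ψ₂ (Set.Iic (φ₂ ybar)))
    (hψ₃_maps : Set.MapsTo ψ₃ (Set.Iic (φ₃ ybar)) (Set.Iic ybar))
    (hψ₃_mono : MonotoneOn ψ₃ (Set.Iic (φ₃ ybar)))
    (hφ_eq₂ : φ₁ ybar = φ₂ ybar) (hφ_eq₃ : φ₁ ybar = φ₃ ybar)
    (hψ₁₂ : ∀ x ∈ Set.Iic (φ₁ ybar), ψ₂ x ≤ ψ₁ x)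
    (hψ₁₃ : ∀ x ∈ Set.Iic (φ₁ ybar), ψ₃ x ≤ ψ₁ x)
    (hψφ₂ : ∀ x ∈ Set.Iic ybar, ψ₂ (φ₂ x) ≤ x)
    (hψφ₃ : ∀ x ∈ Set.Iic ybar, ψ₃ (φ₃ x) ≤ x)
    (hψφ₁ : ∀ x ∈ Set.Iic ybar, x ≤ ψ₁ (φ₁ x)) :
    ∀ a ∈ Set.Iic ybar, ∀ b ∈ Set.Iic ybar, ∀ c ∈ D, ∀ d ∈ D,
      star (ψ₂ (min (φ₂ a) c)) (ψ₃ (min (φ₃ b) d)) ≤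
        ψ₁ (min (φ₁ (star a b)) (min c d)) := by
  intro a ha b hb c hc d hd
  have hab : star a b ∈ Set.Iic ybar := hstar_maps a ha b hb
  have hphi1ab : φ₁ (star a b) ≤ φ₁ ybar := hφ₁_mono hab (le_refl ybar) hab
  have hm2 : min (φ₂ a) c ≤ φ₁ ybar := by
    refine le_trans (min_le_left _ _) ?_
    rw [hφ_eq₂]; exact hφ₂_mono ha (le_refl ybar) ha
  have hm3 : min (φ₃ b) d ≤ φ₁ ybar := by
    refine le_trans (min_le_left _ _) ?_
    rw [hφ_eq₃]; exact hφ₃_mono hb (le_refl ybar) hb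
  have hu : ψ₂ (min (φ₂ a) c) ∈ Set.Iic ybar := by
    apply hψ₂_maps; rw [← hφ_eq₂]; exact hm2
  have hv : ψ₃ (min (φ₃ b) d) ∈ Set.Iic ybar := by
    apply hψ₃_maps; rw [← hφ_eq₃]; exact hm3
  have hua : ψ₂ (min (φ₂ a) c) ≤ a := by
    refine le_trans ?_ (hψφ₂ a ha)
    exact hψ₂_mono (by rw [← hφ_eq₂]; exact hm2)
      (hφ₂_mono ha (le_refl ybar) ha) (min_le_left _ _)
  have hvb : ψ₃ (min (φ₃ b) d) ≤ b := by
    refine le_trans ?_ (hψφ₃ b hb)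
    exact hψ₃_mono (by rw [← hφ_eq₃]; exact hm3)
      (hφ₃_mono hb (le_refl ybar) hb) (min_le_left _ _)
  have huv : star (ψ₂ (min (φ₂ a) c)) (ψ₃ (min (φ₃ b) d)) ∈ Set.Iic ybar :=
    hstar_maps _ hu _ hv
  rcases le_or_gt (φ₁ (star a b)) (min c d) with h | h
  · -- min is φ₁ (star a b)
    rw [min_eq_left h]
    have h1 : star (ψ₂ (min (φ₂ a) c)) (ψ₃ (min (φ₃ b) d)) ≤ star a b :=
      hstar_mono hu hv ha hb hua hvb
    exact le_trans h1 (le_trans (hψφ₁ _ hab)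
      (hψ₁_mono (hφ₁_mono hab (le_refl ybar) hab) hphi1ab
        (hφ₁_mono hab hab (le_refl _))))
  · have hle : star (ψ₂ (min (φ₂ a) c)) (ψ₃ (min (φ₃ b) d)) ≤
        min (ψ₂ (min (φ₂ a) c)) (ψ₃ (min (φ₃ b) d)) := hstar_le _ hu _ hv
    have hcd : min c d ≤ φ₁ ybar := le_trans h.le hphi1ab
    rw [min_eq_right h.le]
    rcases le_total c d with hcd' | hcd'
    · rw [min_eq_left hcd'] at hcd ⊢
      refine le_trans hle (le_trans (min_le_left _ _) ?_)
      refine le_trans (hψ₁₂ _ hm2) (hψ₁_mono hm2 hcd (min_le_right _ _))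
    · rw [min_eq_right hcd'] at hcd ⊢
      refine le_trans hle (le_trans (min_le_right _ _) ?_)
      refine le_trans (hψ₁₃ _ hm3) (hψ₁_mono hm3 hcd (min_le_right _ _))
end

section
/- Let ȳ ∈ (0,∞], let m be a monotone measure on (X,𝒜), and let ⋆ : [0,ȳ]² → [0,ȳ] be nondecreasing and left-continuous with a ⋆ b ≤ min(a,b) for all a,b. Let φ₁ : [0,ȳ] → [0,ȳ] be nondecreasing and φ₂, φ₃ : [0,ȳ] → [0,ȳ] be increasing and right-continuous with φ₁(ȳ) = φ₂(ȳ) = φ₃(ȳ); let ψᵢ : [0,φᵢ(ȳ)] → [0,ȳ] be nondecreasing for i=1,2,3 with ψ₂, ψ₃ left-continuous, ψ₁ ≥ ψ₂ and ψ₁ ≥ ψ₃ pointwise, and ψⱼ(φⱼ(x)) ≤ x ≤ ψ₁(φ₁(x)) for all x ∈ [0,ȳ] and j=2,3. Then for every A ∈ 𝒜 and all f,g ∈ F^ȳ comonotone on A: ψ₁(I_{∧,A}(φ₁(f⋆g))) ≥ ψ₂(I_{∧,A}(φ₂(f))) ⋆ ψ₃(I_{∧,A}(φ₃(g))). -/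
open Set ENNReal

/-!
Let `S₁`, `S₂`, `S₃` be the Sugeno integrals of `φ₁ ∘ (f ⋆ g)`, `φ₂ ∘ f`, `φ₃ ∘ g` over `A`.
Approximating `S₂`, `S₃` from below by `c₂`, `c₃`, left continuity of `⋆`, `ψ₂`, `ψ₃` reduces
the claim to `ψ₂ c₂ ⋆ ψ₃ c₃ ≤ ψ₁ S₁`. Since `ψ₂ ∘ φ₂ ≤ id`, `c₂ < S₂` forces
`c₂ < m (A ∩ {f ≥ ψ₂ c₂})`, and likewise for `g`. Comonotonicity makes these two level sets
nested, so their intersection `E` has measure above `c₂` or above `c₃`, while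
`f ⋆ g ≥ ψ₂ c₂ ⋆ ψ₃ c₃` on `E`. Hence `S₁ ≥ min (φ₁ (ψ₂ c₂ ⋆ ψ₃ c₃)) (m E)`, and each branch of the
minimum gives the bound: through `id ≤ ψ₁ ∘ φ₁`, or through `⋆ ≤ min` and `ψ₂, ψ₃ ≤ ψ₁`.
-/

section LeftContinuity

variable {α β : Type*} [TopologicalSpace α] [LinearOrder α] [OrderBot α] [OrderTopology α]
  [DenselyOrdered α] [TopologicalSpace β]

theorem ContinuousWithinAt.le_of_forall_lt [Preorder β] [OrderClosedTopology β] {F : α → β}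
    {x : α} {B : β} (hF : ContinuousWithinAt F (Iic x) x) (hbot : F ⊥ ≤ B)
    (h : ∀ y < x, F y ≤ B) : F x ≤ B := by
  rcases eq_bot_or_bot_lt x with rfl | hx
  · exact hbot
  · have hx_mem : x ∈ closure (Iio x) := by rw [closure_Iio' ⟨⊥, hx⟩]; exact self_mem_Iic
    exact (hF.mono Iio_subset_Iic_self).closure_le hx_mem continuousWithinAt_const h

theorem le_of_forall_lt_of_continuousWithinAt₂ [Preorder β] [OrderClosedTopology β]
    {G : α → α → β} {x₁ x₂ : α} {B : β}
    (hG₁ : ∀ y < x₂, ContinuousWithinAt (G · y) (Iic x₁) x₁)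
    (hG₂ : ContinuousWithinAt (G x₁) (Iic x₂) x₂)
    (hbot₁ : ∀ y < x₂, G ⊥ y ≤ B) (hbot₂ : G x₁ ⊥ ≤ B)
    (h : ∀ y₁ < x₁, ∀ y₂ < x₂, G y₁ y₂ ≤ B) : G x₁ x₂ ≤ B :=
  hG₂.le_of_forall_lt hbot₂ fun y₂ hy₂ =>
    (hG₁ y₂ hy₂).le_of_forall_lt (hbot₁ y₂ hy₂) fun y₁ hy₁ => h y₁ hy₁ y₂ hy₂

theorem Dense.exists_lt_of_lt_of_continuousWithinAt [LinearOrder β] [OrderClosedTopology β]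
    {s : Set α} (hs : Dense s) {F : α → β} {x : α} (hF : ContinuousWithinAt F (Iic x) x)
    (hmono : MonotoneOn F (Iic x)) {r : β} (hbot : F ⊥ ≤ r) (hr : r < F x) :
    ∃ q ∈ s, q < x ∧ r < F q := by
  obtain ⟨y, hyx, hry⟩ : ∃ y < x, r < F y := by
    by_contra! h
    exact hr.not_ge (hF.le_of_forall_lt hbot h)
  obtain ⟨q, hqs, hyq, hqx⟩ := hs.exists_between hyx
  exact ⟨q, hqs, hqx, hry.trans_le (hmono hyx.le hqx.le hyq.le)⟩

end LeftContinuity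

theorem Mono2On.monotoneOn_left {op : ℝ≥0∞ → ℝ≥0∞ → ℝ≥0∞} {s t : Set ℝ≥0∞}
    (h : Mono2On op s t) {b : ℝ≥0∞} (hb : b ∈ t) : MonotoneOn (op · b) s :=
  fun _ ha _ ha' hle => h ha hb ha' hb hle le_rfl

theorem Mono2On.monotoneOn_right {op : ℝ≥0∞ → ℝ≥0∞ → ℝ≥0∞} {s t : Set ℝ≥0∞}
    (h : Mono2On op s t) {a : ℝ≥0∞} (ha : a ∈ s) : MonotoneOn (op a) t :=
  fun _ hb _ hb' hle => h ha hb ha hb' le_rfl hle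

theorem ComonotoneOn.subset_or_subset {X : Type*} {A : Set X} {f g : X → ℝ≥0∞}
    (hfg : ComonotoneOn A f g) (a b : ℝ≥0∞) :
    A ∩ {x | a ≤ f x} ⊆ {x | b ≤ g x} ∨ A ∩ {x | b ≤ g x} ⊆ {x | a ≤ f x} := by
  rw [or_iff_not_imp_left, not_subset]
  rintro ⟨x, ⟨hxA, hax⟩, hxb⟩ z ⟨hzA, hbz⟩
  by_contra hza
  exact hxb (hbz.trans (hfg z hzA x hxA ((not_le.mp hza).trans_le hax)))

theorem ComonotoneOn.min_le_measure_inter {X : Type*} {A : Set X} {f g : X → ℝ≥0∞}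
    (hfg : ComonotoneOn A f g) (m : Set X → ℝ≥0∞) (a b : ℝ≥0∞) :
    min (m (A ∩ {x | a ≤ f x})) (m (A ∩ {x | b ≤ g x})) ≤
      m (A ∩ {x | a ≤ f x} ∩ {x | b ≤ g x}) := by
  rcases hfg.subset_or_subset a b with h | h
  · rw [inter_eq_left.mpr h]
    exact min_le_left _ _
  · rw [inter_right_comm, inter_eq_left.mpr h]
    exact min_le_right _ _

section Sugeno

variable {X : Type*} {ybar : ℝ≥0∞} {m : Set X → ℝ≥0∞} {A : Set X}

theorem uSugeno_comp_le (hm : m ∅ = 0) {φ : ℝ≥0∞ → ℝ≥0∞} (hφ : MonotoneOn φ (Iic ybar))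
    {F : X → ℝ≥0∞} (hF : ∀ x, F x ≤ ybar) :
    uSugeno ybar (fun a b => min a b) m A (fun x => φ (F x)) ≤ φ ybar := by
  refine iSup₂_le fun t _ => ?_
  rcases le_or_gt t (φ ybar) with ht | ht
  · exact (min_le_left _ _).trans ht
  · have hempty : A ∩ {x | t ≤ φ (F x)} = ∅ := eq_empty_of_forall_notMem fun x hx =>
      (hx.2.trans (hφ (hF x) self_mem_Iic (hF x))).not_gt ht
    simp [hempty, hm]

variable [MeasurableSpace X]

theorem measurableSet_setOf_le_comp {φ : ℝ≥0∞ → ℝ≥0∞} (hφ : MonotoneOn φ (Iic ybar))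
    {f : X → ℝ≥0∞} (hf : Measurable f) (hfy : ∀ x, f x ≤ ybar) (t : ℝ≥0∞) :
    MeasurableSet {x | t ≤ φ (f x)} := by
  have hU : IsUpperSet {y | y ≤ ybar → t ≤ φ y} := fun y z hyz hy hz =>
    (hy (hyz.trans hz)).trans (hφ (hyz.trans hz) hz hyz)
  convert hf hU.ordConnected.measurableSet using 1
  ext x
  simp only [mem_ofPred_eq, mem_preimage, hfy x, forall_const]

theorem measurable_of_mono2On_of_leftCont2On {op : ℝ≥0∞ → ℝ≥0∞ → ℝ≥0∞}
    (hmono : Mono2On op (Iic ybar) (Iic ybar)) (hlc : LeftCont2On op (Iic ybar) (Iic ybar))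
    (hle : ∀ a ∈ Iic ybar, ∀ b ∈ Iic ybar, op a b ≤ min a b)
    {f g : X → ℝ≥0∞} (hf : Measurable f) (hg : Measurable g)
    (hfy : ∀ x, f x ≤ ybar) (hgy : ∀ x, g x ≤ ybar) :
    Measurable fun x => op (f x) (g x) := by
  obtain ⟨s, hsc, hsd⟩ := TopologicalSpace.exists_countable_dense ℝ≥0∞
  -- `{r < op (f, g)}` is a countable union of rectangles: left continuity in each variable
  -- lets a strict lower bound of `op a b` be beaten at a point of `s × s` below `(a, b)`
  have approx : ∀ r, ∀ a ∈ Iic ybar, ∀ b ∈ Iic ybar, r < op a b →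
      ∃ p ∈ s ×ˢ s, p.1 < a ∧ p.2 < b ∧ r < op p.1 p.2 := by
    intro r a ha b hb hr
    have hbot : ∀ c ∈ Iic ybar, op ⊥ c ≤ r ∧ op c ⊥ ≤ r := fun c hc =>
      ⟨((hle ⊥ (bot_le : ⊥ ≤ ybar) c hc).trans (min_le_left _ _)).trans bot_le,
        ((hle c hc ⊥ (bot_le : ⊥ ≤ ybar)).trans (min_le_right _ _)).trans bot_le⟩
    obtain ⟨q, hqs, hqa, hrq⟩ := hsd.exists_lt_of_lt_of_continuousWithinAt (hlc.1 b hb a ha)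
      ((hmono.monotoneOn_left hb).mono (Iic_subset_Iic.mpr ha)) (hbot b hb).1 hr
    have hq : q ∈ Iic ybar := hqa.le.trans ha
    obtain ⟨q', hq's, hq'b, hrq'⟩ := hsd.exists_lt_of_lt_of_continuousWithinAt
      (hlc.2 q hq b hb) ((hmono.monotoneOn_right hq).mono (Iic_subset_Iic.mpr hb))
      (hbot q hq).2 hrq
    exact ⟨(q, q'), ⟨hqs, hq's⟩, hqa, hq'b, hrq'⟩
  refine measurable_of_Ioi fun r => ?_
  have hpre : (fun x => op (f x) (g x)) ⁻¹' Ioi r =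
      ⋃ p ∈ {p ∈ s ×ˢ s | r < op p.1 p.2}, {x | p.1 < f x} ∩ {x | p.2 < g x} := by
    ext x
    simp only [mem_preimage, mem_Ioi, mem_iUnion, mem_inter_iff, mem_ofPred_eq, exists_prop]
    constructor
    · intro hr
      obtain ⟨p, hp, h₁, h₂, hrp⟩ := approx r _ (hfy x) _ (hgy x) hr
      exact ⟨p, ⟨hp, hrp⟩, h₁, h₂⟩
    · rintro ⟨p, ⟨-, hrp⟩, h₁, h₂⟩
      exact hrp.trans_le (hmono (h₁.le.trans (hfy x)) (h₂.le.trans (hgy x)) (hfy x) (hgy x)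
        h₁.le h₂.le)
  rw [hpre]
  exact MeasurableSet.biUnion ((hsc.prod hsc).mono (sep_subset _ _)) fun p _ =>
    (hf measurableSet_Ioi).inter (hg measurableSet_Ioi)

theorem lt_measure_of_lt_uSugeno (hm : MonotoneMeasure m) (hA : MeasurableSet A)
    {f : X → ℝ≥0∞} (hf : Measurable f) (hfy : ∀ x, f x ≤ ybar)
    {φ ψ : ℝ≥0∞ → ℝ≥0∞} (hφ : MonotoneOn φ (Iic ybar)) (hψ : MonotoneOn ψ (Iic (φ ybar)))
    (hψφ : ∀ x ∈ Iic ybar, ψ (φ x) ≤ x) {c : ℝ≥0∞}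
    (hc : c < uSugeno ybar (fun a b => min a b) m A fun x => φ (f x)) :
    c < m (A ∩ {x | ψ c ≤ f x}) := by
  obtain ⟨t, -, hct, hcm⟩ : ∃ t ∈ Iic ybar, c < t ∧ c < m (A ∩ {x | t ≤ φ (f x)}) := by
    simpa only [uSugeno, lt_iSup_iff, lt_min_iff, exists_prop] using hc
  refine hcm.trans_le (hm.2.2 (hA.inter (measurableSet_setOf_le_comp hφ hf hfy t))
    (hA.inter (hf measurableSet_Ici)) ?_)
  rintro x ⟨hxA, hx⟩
  have hφf : φ (f x) ≤ φ ybar := hφ (hfy x) self_mem_Iic (hfy x)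
  have hcφ : c ≤ φ (f x) := hct.le.trans hx
  exact ⟨hxA, (hψ (hcφ.trans hφf) hφf hcφ).trans (hψφ _ (hfy x))⟩

end Sugeno

theorem star_le_of_le_left {star : ℝ≥0∞ → ℝ≥0∞ → ℝ≥0∞} {ψ ψ₁ : ℝ≥0∞ → ℝ≥0∞}
    {ybar z c x b : ℝ≥0∞} (hstar_le : ∀ a ∈ Iic ybar, ∀ b ∈ Iic ybar, star a b ≤ min a b)
    (hψ_maps : MapsTo ψ (Iic z) (Iic ybar)) (hψ₁_mono : MonotoneOn ψ₁ (Iic z))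
    (hψψ₁ : ∀ y ∈ Iic z, ψ y ≤ ψ₁ y) (hcx : c ≤ x) (hxz : x ≤ z) (hb : b ≤ ybar) :
    star (ψ c) b ≤ ψ₁ x :=
  calc star (ψ c) b ≤ ψ c := (hstar_le _ (hψ_maps (hcx.trans hxz)) b hb).trans (min_le_left _ _)
    _ ≤ ψ₁ c := hψψ₁ c (hcx.trans hxz)
    _ ≤ ψ₁ x := hψ₁_mono (hcx.trans hxz) hxz hcx

theorem star_le_of_le_right {star : ℝ≥0∞ → ℝ≥0∞ → ℝ≥0∞} {ψ ψ₁ : ℝ≥0∞ → ℝ≥0∞}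
    {ybar z c x a : ℝ≥0∞} (hstar_le : ∀ a ∈ Iic ybar, ∀ b ∈ Iic ybar, star a b ≤ min a b)
    (hψ_maps : MapsTo ψ (Iic z) (Iic ybar)) (hψ₁_mono : MonotoneOn ψ₁ (Iic z))
    (hψψ₁ : ∀ y ∈ Iic z, ψ y ≤ ψ₁ y) (hcx : c ≤ x) (hxz : x ≤ z) (ha : a ≤ ybar) :
    star a (ψ c) ≤ ψ₁ x :=
  calc star a (ψ c) ≤ ψ c := (hstar_le a ha _ (hψ_maps (hcx.trans hxz))).trans (min_le_right _ _)
    _ ≤ ψ₁ c := hψψ₁ c (hcx.trans hxz)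
    _ ≤ ψ₁ x := hψ₁_mono (hcx.trans hxz) hxz hcx

theorem star_le_of_lt_uSugeno {X : Type*} [MeasurableSpace X] {ybar : ℝ≥0∞}
    {m : Set X → ℝ≥0∞} (hm : MonotoneMeasure m) {star : ℝ≥0∞ → ℝ≥0∞ → ℝ≥0∞}
    (hstar_mono : Mono2On star (Iic ybar) (Iic ybar))
    (hstar_le : ∀ a ∈ Iic ybar, ∀ b ∈ Iic ybar, star a b ≤ min a b)
    {φ₁ φ₂ φ₃ ψ₁ ψ₂ ψ₃ : ℝ≥0∞ → ℝ≥0∞}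
    (hφ₁_maps : MapsTo φ₁ (Iic ybar) (Iic ybar)) (hφ₁_mono : MonotoneOn φ₁ (Iic ybar))
    (hφ₂_mono : MonotoneOn φ₂ (Iic ybar)) (hφ₃_mono : MonotoneOn φ₃ (Iic ybar))
    (hφ_eq₂ : φ₁ ybar = φ₂ ybar) (hφ_eq₃ : φ₁ ybar = φ₃ ybar)
    (hψ₁_mono : MonotoneOn ψ₁ (Iic (φ₁ ybar)))
    (hψ₂_maps : MapsTo ψ₂ (Iic (φ₂ ybar)) (Iic ybar))
    (hψ₂_mono : MonotoneOn ψ₂ (Iic (φ₂ ybar)))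
    (hψ₃_maps : MapsTo ψ₃ (Iic (φ₃ ybar)) (Iic ybar))
    (hψ₃_mono : MonotoneOn ψ₃ (Iic (φ₃ ybar)))
    (hψ₁₂ : ∀ x ∈ Iic (φ₁ ybar), ψ₂ x ≤ ψ₁ x) (hψ₁₃ : ∀ x ∈ Iic (φ₁ ybar), ψ₃ x ≤ ψ₁ x)
    (hψφ₂ : ∀ x ∈ Iic ybar, ψ₂ (φ₂ x) ≤ x) (hψφ₃ : ∀ x ∈ Iic ybar, ψ₃ (φ₃ x) ≤ x)
    (hψφ₁ : ∀ x ∈ Iic ybar, x ≤ ψ₁ (φ₁ x))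
    {A : Set X} (hA : MeasurableSet A) {f g : X → ℝ≥0∞} (hf : Measurable f) (hg : Measurable g)
    (hfy : ∀ x, f x ≤ ybar) (hgy : ∀ x, g x ≤ ybar) (hcom : ComonotoneOn A f g)
    (hfg : Measurable fun x => star (f x) (g x)) {c₂ c₃ : ℝ≥0∞}
    (hc₂ : c₂ < uSugeno ybar (fun a b => min a b) m A fun x => φ₂ (f x))
    (hc₃ : c₃ < uSugeno ybar (fun a b => min a b) m A fun x => φ₃ (g x)) :
    star (ψ₂ c₂) (ψ₃ c₃) ≤
      ψ₁ (uSugeno ybar (fun a b => min a b) m A fun x => φ₁ (star (f x) (g x))) := by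
  set S₁ := uSugeno ybar (fun a b => min a b) m A fun x => φ₁ (star (f x) (g x))
  set a := ψ₂ c₂
  set b := ψ₃ c₃
  have hfg_le : ∀ x, star (f x) (g x) ≤ ybar := fun x =>
    (hstar_le _ (hfy x) _ (hgy x)).trans ((min_le_left _ _).trans (hfy x))
  have hS₁ : S₁ ≤ φ₁ ybar := uSugeno_comp_le hm.1 hφ₁_mono hfg_le
  have ha : a ≤ ybar := hψ₂_maps <| hc₂.le.trans <| uSugeno_comp_le hm.1 hφ₂_mono hfy
  have hb : b ≤ ybar := hψ₃_maps <| hc₃.le.trans <| uSugeno_comp_le hm.1 hφ₃_mono hgy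
  have hab : star a b ≤ ybar := (hstar_le a ha b hb).trans ((min_le_left _ _).trans ha)
  have hlevel :
      min (φ₁ (star a b)) (min (m (A ∩ {x | a ≤ f x})) (m (A ∩ {x | b ≤ g x}))) ≤ S₁ := by
    refine (min_le_min_left _ (hcom.min_le_measure_inter m a b)).trans ?_
    refine (min_le_min_left _ (hm.2.2 ((hA.inter (hf measurableSet_Ici)).inter
      (hg measurableSet_Ici)) (hA.inter (measurableSet_setOf_le_comp hφ₁_mono hfg hfg_le _))
      ?_)).trans (le_iSup₂_of_le (φ₁ (star a b)) (hφ₁_maps hab) le_rfl)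
    rintro x ⟨⟨hxA, hax⟩, hbx⟩
    exact ⟨hxA, hφ₁_mono hab (hfg_le x) (hstar_mono ha hb (hfy x) (hgy x) hax hbx)⟩
  obtain h | h | h := by simpa only [min_le_iff] using hlevel
  · calc star a b ≤ ψ₁ (φ₁ (star a b)) := hψφ₁ _ hab
      _ ≤ ψ₁ S₁ := hψ₁_mono (hφ₁_mono hab self_mem_Iic hab) hS₁ h
  · exact star_le_of_le_left hstar_le (hφ_eq₂ ▸ hψ₂_maps) hψ₁_mono hψ₁₂
      ((lt_measure_of_lt_uSugeno hm hA hf hfy hφ₂_mono hψ₂_mono hψφ₂ hc₂).le.trans h) hS₁ hb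
  · exact star_le_of_le_right hstar_le (hφ_eq₃ ▸ hψ₃_maps) hψ₁_mono hψ₁₃
      ((lt_measure_of_lt_uSugeno hm hA hg hgy hφ₃_mono hψ₃_mono hψφ₃ hc₃).le.trans h) hS₁ ha

theorem statement12_general {X : Type*} [MeasurableSpace X]
    (ybar : ℝ≥0∞)
    (m : Set X → ℝ≥0∞) (hm : MonotoneMeasure m)
    (star : ℝ≥0∞ → ℝ≥0∞ → ℝ≥0∞)
    (hstar_mono : Mono2On star (Set.Iic ybar) (Set.Iic ybar))
    (hstar_lc : LeftCont2On star (Set.Iic ybar) (Set.Iic ybar))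
    (hstar_le : ∀ a ∈ Set.Iic ybar, ∀ b ∈ Set.Iic ybar, star a b ≤ min a b)
    (φ₁ φ₂ φ₃ ψ₁ ψ₂ ψ₃ : ℝ≥0∞ → ℝ≥0∞)
    (hφ₁_maps : Set.MapsTo φ₁ (Set.Iic ybar) (Set.Iic ybar))
    (hφ₁_mono : MonotoneOn φ₁ (Set.Iic ybar))
    (hφ₂_mono : StrictMonoOn φ₂ (Set.Iic ybar))
    (hφ₃_mono : StrictMonoOn φ₃ (Set.Iic ybar))
    (hφ_eq₂ : φ₁ ybar = φ₂ ybar) (hφ_eq₃ : φ₁ ybar = φ₃ ybar)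
    (hψ₁_mono : MonotoneOn ψ₁ (Set.Iic (φ₁ ybar)))
    (hψ₂_maps : Set.MapsTo ψ₂ (Set.Iic (φ₂ ybar)) (Set.Iic ybar))
    (hψ₂_mono : MonotoneOn ψ₂ (Set.Iic (φ₂ ybar)))
    (hψ₂_lc : LeftContOn ψ₂ (Set.Iic (φ₂ ybar)))
    (hψ₃_maps : Set.MapsTo ψ₃ (Set.Iic (φ₃ ybar)) (Set.Iic ybar))
    (hψ₃_mono : MonotoneOn ψ₃ (Set.Iic (φ₃ ybar)))
    (hψ₃_lc : LeftContOn ψ₃ (Set.Iic (φ₃ ybar)))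
    (hψ₁₂ : ∀ x ∈ Set.Iic (φ₁ ybar), ψ₂ x ≤ ψ₁ x)
    (hψ₁₃ : ∀ x ∈ Set.Iic (φ₁ ybar), ψ₃ x ≤ ψ₁ x)
    (hψφ₂ : ∀ x ∈ Set.Iic ybar, ψ₂ (φ₂ x) ≤ x)
    (hψφ₃ : ∀ x ∈ Set.Iic ybar, ψ₃ (φ₃ x) ≤ x)
    (hψφ₁ : ∀ x ∈ Set.Iic ybar, x ≤ ψ₁ (φ₁ x))
    (A : Set X) (hA : MeasurableSet A)
    (f g : X → ℝ≥0∞) (hf : Measurable f) (hg : Measurable g)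
    (hfy : ∀ x, f x ≤ ybar) (hgy : ∀ x, g x ≤ ybar)
    (hcom : ComonotoneOn A f g) :
    star (ψ₂ (uSugeno ybar (fun a b => min a b) m A fun x => φ₂ (f x)))
         (ψ₃ (uSugeno ybar (fun a b => min a b) m A fun x => φ₃ (g x)))
      ≤ ψ₁ (uSugeno ybar (fun a b => min a b) m A fun x => φ₁ (star (f x) (g x))) := by
  set S₁ := uSugeno ybar (fun a b => min a b) m A fun x => φ₁ (star (f x) (g x))
  set S₂ := uSugeno ybar (fun a b => min a b) m A fun x => φ₂ (f x)
  set S₃ := uSugeno ybar (fun a b => min a b) m A fun x => φ₃ (g x)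
  have hfg_le : ∀ x, star (f x) (g x) ≤ ybar := fun x =>
    (hstar_le _ (hfy x) _ (hgy x)).trans ((min_le_left _ _).trans (hfy x))
  have hS₁ : S₁ ≤ φ₁ ybar := uSugeno_comp_le hm.1 hφ₁_mono hfg_le
  have hS₂ : S₂ ≤ φ₂ ybar := uSugeno_comp_le hm.1 hφ₂_mono.monotoneOn hfy
  have hS₃ : S₃ ≤ φ₃ ybar := uSugeno_comp_le hm.1 hφ₃_mono.monotoneOn hgy
  refine le_of_forall_lt_of_continuousWithinAt₂ (G := fun c₂ c₃ => star (ψ₂ c₂) (ψ₃ c₃))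
    (fun c₃ hc₃ => ?_) ?_ (fun c₃ hc₃ => ?_) ?_ fun c₂ hc₂ c₃ hc₃ => ?_
  · exact (hstar_lc.1 _ (hψ₃_maps (hc₃.le.trans hS₃)) _ (hψ₂_maps hS₂)).comp (hψ₂_lc _ hS₂)
      fun y hy => hψ₂_mono (mem_Iic.1 hy |>.trans hS₂) hS₂ hy
  · exact (hstar_lc.2 _ (hψ₂_maps hS₂) _ (hψ₃_maps hS₃)).comp (hψ₃_lc _ hS₃)
      fun y hy => hψ₃_mono (mem_Iic.1 hy |>.trans hS₃) hS₃ hy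
  · exact star_le_of_le_left hstar_le (hφ_eq₂ ▸ hψ₂_maps) hψ₁_mono hψ₁₂ bot_le hS₁
      (hψ₃_maps (hc₃.le.trans hS₃))
  · exact star_le_of_le_right hstar_le (hφ_eq₃ ▸ hψ₃_maps) hψ₁_mono hψ₁₃ bot_le hS₁
      (hψ₂_maps hS₂)
  · exact star_le_of_lt_uSugeno hm hstar_mono hstar_le hφ₁_maps hφ₁_mono hφ₂_mono.monotoneOn
      hφ₃_mono.monotoneOn hφ_eq₂ hφ_eq₃ hψ₁_mono hψ₂_maps hψ₂_mono hψ₃_maps hψ₃_mono hψ₁₂ hψ₁₃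
      hψφ₂ hψφ₃ hψφ₁ hA hf hg hfy hgy hcom
      (measurable_of_mono2On_of_leftCont2On hstar_mono hstar_lc hstar_le hf hg hfy hgy) hc₂ hc₃

theorem statement12 {X : Type*} [MeasurableSpace X]
    (ybar : ℝ≥0∞) (hybar : 0 < ybar)
    (m : Set X → ℝ≥0∞) (hm : MonotoneMeasure m)
    (star : ℝ≥0∞ → ℝ≥0∞ → ℝ≥0∞)
    (hstar_maps : ∀ a ∈ Set.Iic ybar, ∀ b ∈ Set.Iic ybar, star a b ∈ Set.Iic ybar)
    (hstar_mono : Mono2On star (Set.Iic ybar) (Set.Iic ybar))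
    (hstar_lc : LeftCont2On star (Set.Iic ybar) (Set.Iic ybar))
    (hstar_le : ∀ a ∈ Set.Iic ybar, ∀ b ∈ Set.Iic ybar, star a b ≤ min a b)
    (φ₁ φ₂ φ₃ ψ₁ ψ₂ ψ₃ : ℝ≥0∞ → ℝ≥0∞)
    (hφ₁_maps : Set.MapsTo φ₁ (Set.Iic ybar) (Set.Iic ybar))
    (hφ₁_mono : MonotoneOn φ₁ (Set.Iic ybar))
    (hφ₂_maps : Set.MapsTo φ₂ (Set.Iic ybar) (Set.Iic ybar))
    (hφ₂_mono : StrictMonoOn φ₂ (Set.Iic ybar))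
    (hφ₂_rc : RightContOn φ₂ (Set.Iic ybar))
    (hφ₃_maps : Set.MapsTo φ₃ (Set.Iic ybar) (Set.Iic ybar))
    (hφ₃_mono : StrictMonoOn φ₃ (Set.Iic ybar))
    (hφ₃_rc : RightContOn φ₃ (Set.Iic ybar))
    (hφ_eq₂ : φ₁ ybar = φ₂ ybar) (hφ_eq₃ : φ₁ ybar = φ₃ ybar)
    (hψ₁_maps : Set.MapsTo ψ₁ (Set.Iic (φ₁ ybar)) (Set.Iic ybar))
    (hψ₁_mono : MonotoneOn ψ₁ (Set.Iic (φ₁ ybar)))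
    (hψ₂_maps : Set.MapsTo ψ₂ (Set.Iic (φ₂ ybar)) (Set.Iic ybar))
    (hψ₂_mono : MonotoneOn ψ₂ (Set.Iic (φ₂ ybar)))
    (hψ₂_lc : LeftContOn ψ₂ (Set.Iic (φ₂ ybar)))
    (hψ₃_maps : Set.MapsTo ψ₃ (Set.Iic (φ₃ ybar)) (Set.Iic ybar))
    (hψ₃_mono : MonotoneOn ψ₃ (Set.Iic (φ₃ ybar)))
    (hψ₃_lc : LeftContOn ψ₃ (Set.Iic (φ₃ ybar)))
    (hψ₁₂ : ∀ x ∈ Set.Iic (φ₁ ybar), ψ₂ x ≤ ψ₁ x)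
    (hψ₁₃ : ∀ x ∈ Set.Iic (φ₁ ybar), ψ₃ x ≤ ψ₁ x)
    (hψφ₂ : ∀ x ∈ Set.Iic ybar, ψ₂ (φ₂ x) ≤ x)
    (hψφ₃ : ∀ x ∈ Set.Iic ybar, ψ₃ (φ₃ x) ≤ x)
    (hψφ₁ : ∀ x ∈ Set.Iic ybar, x ≤ ψ₁ (φ₁ x))
    (A : Set X) (hA : MeasurableSet A)
    (f g : X → ℝ≥0∞) (hf : Measurable f) (hg : Measurable g)
    (hfy : ∀ x, f x ≤ ybar) (hgy : ∀ x, g x ≤ ybar)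
    (hcom : ComonotoneOn A f g) :
    star (ψ₂ (uSugeno ybar (fun a b => min a b) m A fun x => φ₂ (f x)))
         (ψ₃ (uSugeno ybar (fun a b => min a b) m A fun x => φ₃ (g x)))
      ≤ ψ₁ (uSugeno ybar (fun a b => min a b) m A fun x => φ₁ (star (f x) (g x))) :=
  statement12_general ybar m hm star hstar_mono hstar_lc hstar_le φ₁ φ₂ φ₃ ψ₁ ψ₂ ψ₃ hφ₁_maps
    hφ₁_mono hφ₂_mono hφ₃_mono hφ_eq₂ hφ_eq₃ hψ₁_mono hψ₂_maps hψ₂_mono hψ₂_lc hψ₃_maps hψ₃_mono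
    hψ₃_lc hψ₁₂ hψ₁₃ hψφ₂ hψφ₃ hψφ₁ A hA f g hf hg hfy hgy hcom
end

section
/- Let ȳ ∈ (0,∞], let m be a monotone measure on (X,𝒜), and let ⋆ : [0,ȳ]² → [0,ȳ] be nondecreasing and left-continuous with a ⋆ b ≤ min(a,b) for all a,b. Let φ : [0,ȳ] → [0,ȳ] be continuous and increasing with φ(0) = 0, and let φ⁻¹ denote the inverse of φ on its range [0,φ(ȳ)]. Then for every A ∈ 𝒜 and all f,g ∈ F^ȳ comonotone on A: φ⁻¹(I_{∧,A}(φ(f⋆g))) ≥ φ⁻¹(I_{∧,A}(φ(f))) ⋆ φ⁻¹(I_{∧,A}(φ(g))). (The integrals lie in [0,φ(ȳ)], so φ⁻¹ is applicable.) -/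
open Set ENNReal

/-!
Write `I` for the Sugeno integral over `A` and take `p' < ψ (I (φ ∘ f))`, `q' < ψ (I (φ ∘ g))`.
The definition of `I` gives levels `w > p'` and `v > q'` whose superlevel sets of `f` and `g`
in `A` have measure above `φ p'` and `φ q'`. Comonotonicity makes these two sets nested, so their
intersection has measure at least `min (φ p') (φ q') ≥ φ (p' ⋆ q')`, and on it
`f ⋆ g ≥ p' ⋆ q'`; hence `φ (p' ⋆ q') ≤ I (φ ∘ (f ⋆ g))`. Left-continuity of `⋆` then lets `p'`
and `q'` increase to the two integrals.
-/

lemma ContinuousWithinAt.le_of_forall_lt_le {α β : Type*} [TopologicalSpace α] [LinearOrder α]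
    [OrderTopology α] [DenselyOrdered α] [TopologicalSpace β] [Preorder β]
    [OrderClosedTopology β] {u : α → β} {x : α} {M : β} (hu : ContinuousWithinAt u (Iic x) x)
    (hx : (Iio x).Nonempty) (h : ∀ y < x, u y ≤ M) : u x ≤ M :=
  (hu.mono Iio_subset_Iic_self).closure_le (by rw [closure_Iio' hx]; exact self_mem_Iic)
    continuousWithinAt_const h

section LeftContinuous

variable {ybar : ℝ≥0∞} {op : ℝ≥0∞ → ℝ≥0∞ → ℝ≥0∞}

lemma LeftCont2On.le_of_forall_lt_lt_le (hlc : LeftCont2On op (Iic ybar) (Iic ybar))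
    (hle : ∀ a ∈ Iic ybar, ∀ b ∈ Iic ybar, op a b ≤ min a b)
    {p q M : ℝ≥0∞} (hp : p ≤ ybar) (hq : q ≤ ybar)
    (h : ∀ p' < p, ∀ q' < q, op p' q' ≤ M) : op p q ≤ M := by
  have hzero : ∀ a ≤ ybar, ∀ b ≤ ybar, a = 0 ∨ b = 0 → op a b ≤ M := fun a ha b hb hab =>
    (hle a ha b hb).trans <| by rcases hab with rfl | rfl <;> simp
  have h_of_lt_q : ∀ q' < q, op p q' ≤ M := by
    intro q' hq'
    rcases eq_or_ne p 0 with hp0 | hp0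
    · exact hzero p hp q' (hq'.le.trans hq) (.inl hp0)
    · exact (hlc.1 q' (hq'.le.trans hq) p hp).le_of_forall_lt_le ⟨0, pos_iff_ne_zero.2 hp0⟩
        fun p' hp' => h p' hp' q' hq'
  rcases eq_or_ne q 0 with hq0 | hq0
  · exact hzero p hp q hq (.inr hq0)
  · exact (hlc.2 p hp q hq).le_of_forall_lt_le ⟨0, pos_iff_ne_zero.2 hq0⟩ h_of_lt_q

/-- Left-continuity writes `op (f x) (g x)` as a supremum over rational points strictly below
`(f x, g x)`, a countable supremum of measurable functions. -/
lemma LeftCont2On.measurable_comp₂ {X : Type*} [MeasurableSpace X]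
    (hlc : LeftCont2On op (Iic ybar) (Iic ybar)) (hmono : Mono2On op (Iic ybar) (Iic ybar))
    (hle : ∀ a ∈ Iic ybar, ∀ b ∈ Iic ybar, op a b ≤ min a b)
    {f g : X → ℝ≥0∞} (hf : Measurable f) (hg : Measurable g)
    (hfy : ∀ x, f x ≤ ybar) (hgy : ∀ x, g x ≤ ybar) :
    Measurable fun x => op (f x) (g x) := by
  classical
  let r (s : ℚ) : ℝ≥0∞ := Real.toNNReal s
  have hrep : (fun x => op (f x) (g x)) =
      fun x => ⨆ s : ℚ × ℚ, if r s.1 < f x ∧ r s.2 < g x then op (r s.1) (r s.2) else 0 := by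
    funext x
    refine le_antisymm ?_ (iSup_le fun s => ?_)
    · refine hlc.le_of_forall_lt_lt_le hle (hfy x) (hgy x) fun p' hp' q' hq' => ?_
      obtain ⟨s₁, -, hp's₁, hs₁f⟩ := ENNReal.lt_iff_exists_rat_btwn.mp hp'
      obtain ⟨s₂, -, hq's₂, hs₂g⟩ := ENNReal.lt_iff_exists_rat_btwn.mp hq'
      refine le_iSup_of_le (s₁, s₂) ?_
      rw [if_pos ⟨hs₁f, hs₂g⟩]
      exact hmono (hp'.le.trans (hfy x)) (hq'.le.trans (hgy x)) (hs₁f.le.trans (hfy x))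
        (hs₂g.le.trans (hgy x)) hp's₁.le hq's₂.le
    · split_ifs with hs
      · exact hmono (hs.1.le.trans (hfy x)) (hs.2.le.trans (hgy x)) (hfy x) (hgy x)
          hs.1.le hs.2.le
      · exact zero_le
  rw [hrep]
  exact .iSup fun s => .ite ((hf measurableSet_Ioi).inter (hg measurableSet_Ioi))
    measurable_const measurable_const

end LeftContinuous

section Sugeno

variable {X : Type*} {ybar : ℝ≥0∞} {m : Set X → ℝ≥0∞} {A : Set X} {h : X → ℝ≥0∞}

lemma le_uSugeno_min {t : ℝ≥0∞} (ht : t ≤ ybar) :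
    min t (m (A ∩ {x | t ≤ h x})) ≤ uSugeno ybar (fun a b => min a b) m A h :=
  le_iSup₂_of_le (f := fun t (_ : t ∈ Iic ybar) => min t (m (A ∩ {x | t ≤ h x}))) t ht le_rfl

lemma exists_lt_of_lt_uSugeno_min {s : ℝ≥0∞}
    (hs : s < uSugeno ybar (fun a b => min a b) m A h) :
    ∃ t ≤ ybar, s < t ∧ s < m (A ∩ {x | t ≤ h x}) := by
  obtain ⟨t, ht, hst⟩ := lt_biSup_iff.mp hs
  exact ⟨t, ht, lt_min_iff.mp hst⟩

lemma uSugeno_min_le (hm0 : m ∅ = 0) {c : ℝ≥0∞} (hc : ∀ x, h x ≤ c) :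
    uSugeno ybar (fun a b => min a b) m A h ≤ c := by
  refine iSup₂_le fun t _ => ?_
  rcases le_or_gt t c with htc | hct
  · exact (min_le_left _ _).trans htc
  · have hempty : A ∩ {x | t ≤ h x} = ∅ :=
      eq_empty_of_forall_notMem fun x hx => (hct.trans_le hx.2).not_ge (hc x)
    simp [hempty, hm0]

end Sugeno

section Transport

variable {X : Type*} {ybar : ℝ≥0∞} {φ ψ : ℝ≥0∞ → ℝ≥0∞}

lemma StrictMonoOn.le_leftInvOn_iff (hφ : StrictMonoOn φ (Iic ybar))
    (hψ : LeftInvOn ψ φ (Iic ybar)) (hsurj : SurjOn φ (Iic ybar) (Iic (φ ybar)))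
    {x y : ℝ≥0∞} (hx : x ≤ ybar) (hy : y ≤ φ ybar) : x ≤ ψ y ↔ φ x ≤ y := by
  obtain ⟨w, hw, rfl⟩ := hsurj hy
  rw [hψ hw]
  exact (hφ.le_iff_le hx hw).symm

lemma StrictMonoOn.lt_leftInvOn_iff (hφ : StrictMonoOn φ (Iic ybar))
    (hψ : LeftInvOn ψ φ (Iic ybar)) (hsurj : SurjOn φ (Iic ybar) (Iic (φ ybar)))
    {x y : ℝ≥0∞} (hx : x ≤ ybar) (hy : y ≤ φ ybar) : x < ψ y ↔ φ x < y := by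
  obtain ⟨w, hw, rfl⟩ := hsurj hy
  rw [hψ hw]
  exact (hφ.lt_iff_lt hx hw).symm

lemma StrictMonoOn.setOf_le_comp_eq (hφ : StrictMonoOn φ (Iic ybar)) {h : X → ℝ≥0∞}
    (hh : ∀ x, h x ≤ ybar) {w : ℝ≥0∞} (hw : w ≤ ybar) :
    {x | φ w ≤ φ (h x)} = {x | w ≤ h x} := by
  ext x
  exact hφ.le_iff_le hw (hh x)

variable {m : Set X → ℝ≥0∞} {A : Set X} {h : X → ℝ≥0∞}

lemma exists_lt_superlevel_of_lt_uSugeno_comp (hφ : StrictMonoOn φ (Iic ybar))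
    (hsurj : SurjOn φ (Iic ybar) (Iic (φ ybar))) (hm0 : m ∅ = 0) (hh : ∀ x, h x ≤ ybar)
    {s : ℝ≥0∞} (hs : s ≤ ybar)
    (hlt : φ s < uSugeno ybar (fun a b => min a b) m A fun x => φ (h x)) :
    ∃ w, s < w ∧ φ s < m (A ∩ {x | w ≤ h x}) := by
  obtain ⟨t, -, hst, htm⟩ := exists_lt_of_lt_uSugeno_min hlt
  obtain ⟨x, -, hx⟩ : (A ∩ {x | t ≤ φ (h x)}).Nonempty :=
    nonempty_iff_ne_empty.2 fun he => by simp [he, hm0] at htm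
  obtain ⟨w, hw, rfl⟩ := hsurj (hx.trans (hφ.monotoneOn (hh x) self_mem_Iic (hh x)))
  refine ⟨w, (hφ.lt_iff_lt hs hw).mp hst, ?_⟩
  rwa [hφ.setOf_le_comp_eq hh hw] at htm

lemma le_uSugeno_comp (hφ : StrictMonoOn φ (Iic ybar)) (hmaps : MapsTo φ (Iic ybar) (Iic ybar))
    (hh : ∀ x, h x ≤ ybar) {t : ℝ≥0∞} (ht : t ≤ ybar) (htm : φ t ≤ m (A ∩ {x | t ≤ h x})) :
    φ t ≤ uSugeno ybar (fun a b => min a b) m A fun x => φ (h x) :=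
  calc φ t = min (φ t) (m (A ∩ {x | φ t ≤ φ (h x)})) := by
        rw [hφ.setOf_le_comp_eq hh ht, min_eq_left htm]
    _ ≤ _ := le_uSugeno_min (hmaps ht)

end Transport

/-- Superlevel sets of comonotone functions are nested, so their intersection is one of them. -/
lemma ComonotoneOn.min_le_inter_superlevel {X : Type*} {A : Set X} {f g : X → ℝ≥0∞}
    (hcom : ComonotoneOn A f g) (m : Set X → ℝ≥0∞) (w v : ℝ≥0∞) :
    min (m (A ∩ {x | w ≤ f x})) (m (A ∩ {x | v ≤ g x})) ≤
      m (A ∩ {x | w ≤ f x ∧ v ≤ g x}) := by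
  by_cases hfg : ∀ x ∈ A, w ≤ f x → v ≤ g x
  · refine (min_le_left _ _).trans_eq (congrArg m ?_)
    ext x
    simp only [mem_inter_iff, mem_ofPred_eq]
    exact ⟨fun ⟨hA, hf⟩ => ⟨hA, hf, hfg x hA hf⟩, fun ⟨hA, hf, _⟩ => ⟨hA, hf⟩⟩
  · push Not at hfg
    obtain ⟨y, hyA, hwy, hyv⟩ := hfg
    refine (min_le_right _ _).trans_eq (congrArg m ?_)
    ext x
    simp only [mem_inter_iff, mem_ofPred_eq]
    refine ⟨fun ⟨hA, hg⟩ => ⟨hA, ?_, hg⟩, fun ⟨hA, _, hg⟩ => ⟨hA, hg⟩⟩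
    by_contra! hfx
    exact (hyv.trans_le hg).not_ge (hcom x hA y hyA (hfx.trans_le hwy))

lemma le_uSugeno_comp_of_comonotoneOn {X : Type*} [MeasurableSpace X] {ybar : ℝ≥0∞}
    {m : Set X → ℝ≥0∞} (hm : MonotoneMeasure m) {op : ℝ≥0∞ → ℝ≥0∞ → ℝ≥0∞}
    (hmono : Mono2On op (Iic ybar) (Iic ybar))
    (hle : ∀ a ∈ Iic ybar, ∀ b ∈ Iic ybar, op a b ≤ min a b)
    {φ : ℝ≥0∞ → ℝ≥0∞} (hφ : StrictMonoOn φ (Iic ybar)) (hmaps : MapsTo φ (Iic ybar) (Iic ybar))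
    (hsurj : SurjOn φ (Iic ybar) (Iic (φ ybar))) {A : Set X} (hA : MeasurableSet A)
    {f g : X → ℝ≥0∞} (hf : Measurable f) (hg : Measurable g)
    (hfy : ∀ x, f x ≤ ybar) (hgy : ∀ x, g x ≤ ybar) (hcom : ComonotoneOn A f g)
    (hfg : Measurable fun x => op (f x) (g x)) {p q : ℝ≥0∞} (hp : p ≤ ybar) (hq : q ≤ ybar)
    (hpf : φ p < uSugeno ybar (fun a b => min a b) m A fun x => φ (f x))
    (hqg : φ q < uSugeno ybar (fun a b => min a b) m A fun x => φ (g x)) :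
    φ (op p q) ≤ uSugeno ybar (fun a b => min a b) m A fun x => φ (op (f x) (g x)) := by
  obtain ⟨w, hpw, hwf⟩ := exists_lt_superlevel_of_lt_uSugeno_comp hφ hsurj hm.1 hfy hp hpf
  obtain ⟨v, hqv, hvg⟩ := exists_lt_superlevel_of_lt_uSugeno_comp hφ hsurj hm.1 hgy hq hqg
  have hpq : op p q ≤ ybar := (hle p hp q hq).trans (min_le_of_left_le hp)
  refine le_uSugeno_comp hφ hmaps (fun x => (hle _ (hfy x) _ (hgy x)).trans
    (min_le_of_left_le (hfy x))) hpq ?_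
  calc φ (op p q)
      ≤ min (φ p) (φ q) := le_min
        (hφ.monotoneOn hpq hp ((hle p hp q hq).trans (min_le_left _ _)))
        (hφ.monotoneOn hpq hq ((hle p hp q hq).trans (min_le_right _ _)))
    _ ≤ min (m (A ∩ {x | w ≤ f x})) (m (A ∩ {x | v ≤ g x})) := min_le_min hwf.le hvg.le
    _ ≤ m (A ∩ {x | w ≤ f x ∧ v ≤ g x}) := hcom.min_le_inter_superlevel m w v
    _ ≤ m (A ∩ {x | op p q ≤ op (f x) (g x)}) :=
        hm.2.2 (hA.inter ((hf measurableSet_Ici).inter (hg measurableSet_Ici)))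
          (hA.inter (measurableSet_le measurable_const hfg)) fun x ⟨hxA, hwx, hvx⟩ =>
            ⟨hxA, hmono hp hq (hfy x) (hgy x) (hpw.le.trans hwx) (hqv.le.trans hvx)⟩

theorem statement13_general {X : Type*} [MeasurableSpace X]
    (ybar : ℝ≥0∞)
    (m : Set X → ℝ≥0∞) (hm : MonotoneMeasure m)
    (star : ℝ≥0∞ → ℝ≥0∞ → ℝ≥0∞)
    (hstar_mono : Mono2On star (Set.Iic ybar) (Set.Iic ybar))
    (hstar_lc : LeftCont2On star (Set.Iic ybar) (Set.Iic ybar))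
    (hstar_le : ∀ a ∈ Set.Iic ybar, ∀ b ∈ Set.Iic ybar, star a b ≤ min a b)
    (φ ψ : ℝ≥0∞ → ℝ≥0∞)
    (hφ_maps : Set.MapsTo φ (Set.Iic ybar) (Set.Iic ybar))
    (hφ_cont : ContinuousOn φ (Set.Iic ybar))
    (hφ_mono : StrictMonoOn φ (Set.Iic ybar))
    (hφ_zero : φ 0 = 0)
    (hψ_inv : ∀ x ∈ Set.Iic ybar, ψ (φ x) = x)
    (A : Set X) (hA : MeasurableSet A)
    (f g : X → ℝ≥0∞) (hf : Measurable f) (hg : Measurable g)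
    (hfy : ∀ x, f x ≤ ybar) (hgy : ∀ x, g x ≤ ybar)
    (hcom : ComonotoneOn A f g) :
    star (ψ (uSugeno ybar (fun a b => min a b) m A fun x => φ (f x)))
         (ψ (uSugeno ybar (fun a b => min a b) m A fun x => φ (g x)))
      ≤ ψ (uSugeno ybar (fun a b => min a b) m A fun x => φ (star (f x) (g x))) := by
  have hsurj : SurjOn φ (Iic ybar) (Iic (φ ybar)) := by
    have := hφ_cont.surjOn_Icc (zero_le : 0 ≤ ybar) self_mem_Iic
    rwa [hφ_zero, ← bot_eq_zero, Icc_bot] at this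
  have hψ : LeftInvOn ψ φ (Iic ybar) := fun x hx => hψ_inv x hx
  have hstar_y : ∀ a ≤ ybar, ∀ b ≤ ybar, star a b ≤ ybar := fun a ha b hb =>
    (hstar_le a ha b hb).trans (min_le_of_left_le ha)
  have hbound : ∀ h : X → ℝ≥0∞, (∀ x, h x ≤ ybar) →
      (uSugeno ybar (fun a b => min a b) m A fun x => φ (h x)) ≤ φ ybar := fun h hh =>
    uSugeno_min_le hm.1 fun x => hφ_mono.monotoneOn (hh x) self_mem_Iic (hh x)
  have hp := hψ.mapsTo hsurj (hbound f hfy)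
  have hq := hψ.mapsTo hsurj (hbound g hgy)
  refine hstar_lc.le_of_forall_lt_lt_le hstar_le hp hq fun p hpf q hqg => ?_
  have hp' : p ≤ ybar := hpf.le.trans hp
  have hq' : q ≤ ybar := hqg.le.trans hq
  rw [hφ_mono.le_leftInvOn_iff hψ hsurj (hstar_y p hp' q hq')
    (hbound _ fun x => hstar_y _ (hfy x) _ (hgy x))]
  exact le_uSugeno_comp_of_comonotoneOn hm hstar_mono hstar_le hφ_mono hφ_maps hsurj hA hf hg
    hfy hgy hcom (hstar_lc.measurable_comp₂ hstar_mono hstar_le hf hg hfy hgy) hp' hq'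
    ((hφ_mono.lt_leftInvOn_iff hψ hsurj hp' (hbound f hfy)).mp hpf)
    ((hφ_mono.lt_leftInvOn_iff hψ hsurj hq' (hbound g hgy)).mp hqg)

theorem statement13 {X : Type*} [MeasurableSpace X]
    (ybar : ℝ≥0∞) (hybar : 0 < ybar)
    (m : Set X → ℝ≥0∞) (hm : MonotoneMeasure m)
    (star : ℝ≥0∞ → ℝ≥0∞ → ℝ≥0∞)
    (hstar_maps : ∀ a ∈ Set.Iic ybar, ∀ b ∈ Set.Iic ybar, star a b ∈ Set.Iic ybar)
    (hstar_mono : Mono2On star (Set.Iic ybar) (Set.Iic ybar))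
    (hstar_lc : LeftCont2On star (Set.Iic ybar) (Set.Iic ybar))
    (hstar_le : ∀ a ∈ Set.Iic ybar, ∀ b ∈ Set.Iic ybar, star a b ≤ min a b)
    (φ ψ : ℝ≥0∞ → ℝ≥0∞)
    (hφ_maps : Set.MapsTo φ (Set.Iic ybar) (Set.Iic ybar))
    (hφ_cont : ContinuousOn φ (Set.Iic ybar))
    (hφ_mono : StrictMonoOn φ (Set.Iic ybar))
    (hφ_zero : φ 0 = 0)
    (hψ_inv : ∀ x ∈ Set.Iic ybar, ψ (φ x) = x)
    (hψ_inv' : ∀ y ∈ Set.Iic (φ ybar), φ (ψ y) = y)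
    (A : Set X) (hA : MeasurableSet A)
    (f g : X → ℝ≥0∞) (hf : Measurable f) (hg : Measurable g)
    (hfy : ∀ x, f x ≤ ybar) (hgy : ∀ x, g x ≤ ybar)
    (hcom : ComonotoneOn A f g) :
    star (ψ (uSugeno ybar (fun a b => min a b) m A fun x => φ (f x)))
         (ψ (uSugeno ybar (fun a b => min a b) m A fun x => φ (g x)))
      ≤ ψ (uSugeno ybar (fun a b => min a b) m A fun x => φ (star (f x) (g x))) :=
  statement13_general ybar m hm star hstar_mono hstar_lc hstar_le φ ψ hφ_maps hφ_cont hφ_mono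
    hφ_zero hψ_inv A hA f g hf hg hfy hgy hcom
end

section
/- Let ȳ ∈ (0,∞] and let m be a monotone measure on (X,𝒜). Let φ₁, φ₂ : [0,ȳ] → [0,ȳ] be increasing and right-continuous with φ₁(ȳ) = φ₂(ȳ), and let ψ₁, ψ₂ : [0,φ₁(ȳ)] → [0,ȳ] be nondecreasing with ψ₂ left-continuous, such that ψ₁ ≥ ψ₂ pointwise and ψ₂(φ₂(x)) ≤ x ≤ ψ₁(φ₁(x)) for all x ∈ [0,ȳ]. Then the Liapunov type inequality ψ₁(I_{∧,A}(φ₁(f))) ≥ ψ₂(I_{∧,A}(φ₂(f))) holds for every f ∈ F^ȳ and every A ∈ 𝒜. -/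
open Set ENNReal

/-!
Put `J₁ = I(φ₁ ∘ f)` and `J₂ = I(φ₂ ∘ f)`. Since `ψ₂` is nondecreasing and left-continuous it
commutes with the supremum defining `J₂`, so it suffices to bound `ψ₂ (min s (m (A ∩ {s ≤ φ₂ ∘ f})))`
for each level `s`. Right-continuity of `φ₂` gives a least `t` with `s ≤ φ₂ t`, so this level set
is `{t ≤ f}`; comparing `min s M` with `min (φ₁ t) M` (which is a term of `J₁`) through
`ψ₂ ∘ φ₂ ≤ id ≤ ψ₁ ∘ φ₁` and `ψ₂ ≤ ψ₁` finishes the proof.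
-/

open Filter Topology

lemma MonotoneOn.exists_le_apply_iff_le {φ : ℝ≥0∞ → ℝ≥0∞} {ybar s : ℝ≥0∞}
    (hφ : MonotoneOn φ (Iic ybar)) (hrc : RightContOn φ (Iic ybar)) (hs : s ≤ φ ybar) :
    ∃ t₀ ≤ ybar, ∀ t ≤ ybar, s ≤ φ t ↔ t₀ ≤ t := by
  set S : Set ℝ≥0∞ := {t | t ≤ ybar ∧ s ≤ φ t}
  have hS : S.Nonempty := ⟨ybar, le_rfl, hs⟩
  have ht₀ : sInf S ≤ ybar := sInf_le ⟨le_rfl, hs⟩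
  have hst₀ : s ≤ φ (sInf S) := by
    have : (𝓝[S] sInf S).NeBot :=
      mem_closure_iff_nhdsWithin_neBot.mp (csInf_mem_closure hS (OrderBot.bddBelow S))
    exact ge_of_tendsto ((hrc _ ht₀).mono_left (nhdsWithin_mono _ fun t ht => sInf_le ht))
      (eventually_mem_nhdsWithin.mono fun t ht => ht.2)
  exact ⟨sInf S, ht₀, fun t ht => ⟨fun h => sInf_le ⟨ht, h⟩, fun h => hst₀.trans (hφ ht₀ ht h)⟩⟩

lemma MonotoneOn.map_biSup_of_leftContOn {ι : Type*} {s : Set ι} (hs : s.Nonempty)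
    {g : ι → ℝ≥0∞} {ψ : ℝ≥0∞ → ℝ≥0∞} {c : ℝ≥0∞} (hψ : MonotoneOn ψ (Iic c))
    (hlc : LeftContOn ψ (Iic c)) (hg : ⨆ i ∈ s, g i ≤ c) :
    ψ (⨆ i ∈ s, g i) = ⨆ i ∈ s, ψ (g i) := by
  rw [← sSup_image] at hg ⊢
  have hsub : g '' s ⊆ Iic (sSup (g '' s)) := fun _ hx => le_sSup hx
  rw [(hψ.mono (hsub.trans (Iic_subset_Iic.mpr hg))).map_csSup_of_continuousWithinAt
    ((hlc _ hg).mono hsub) (hs.image g), image_image, sSup_image]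

section Sugeno

variable {X : Type*} {ybar : ℝ≥0∞} {m : Set X → ℝ≥0∞} {D : Set X}

lemma uSugeno_min_le_of_le (h0 : m ∅ = 0) {g : X → ℝ≥0∞} {c : ℝ≥0∞} (hg : ∀ x, g x ≤ c) :
    uSugeno ybar (fun a b => min a b) m D g ≤ c := by
  refine iSup₂_le fun t _ => ?_
  rcases le_or_gt t c with htc | hct
  · exact (min_le_left _ _).trans htc
  · have hempty : D ∩ {x | t ≤ g x} = ∅ :=
      eq_empty_of_forall_notMem fun x hx => (hg x).not_gt (hct.trans_le hx.2)
    simp [hempty, h0]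

lemma min_le_uSugeno_comp {φ : ℝ≥0∞ → ℝ≥0∞} (hmaps : MapsTo φ (Iic ybar) (Iic ybar))
    (hφ : StrictMonoOn φ (Iic ybar)) {f : X → ℝ≥0∞} (hfy : ∀ x, f x ≤ ybar) {t : ℝ≥0∞}
    (ht : t ≤ ybar) :
    min (φ t) (m (D ∩ {x | t ≤ f x})) ≤ uSugeno ybar (fun a b => min a b) m D fun x => φ (f x) := by
  have hlevel : {x | φ t ≤ φ (f x)} = {x | t ≤ f x} :=
    Set.ext fun x => hφ.le_iff_le ht (hfy x)
  have := le_iSup₂ (f := fun t (_ : t ∈ Iic ybar) => min t (m (D ∩ {x | t ≤ φ (f x)})))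
    (φ t) (hmaps ht)
  rwa [hlevel] at this

lemma exists_min_levelSet_le (h0 : m ∅ = 0) {φ : ℝ≥0∞ → ℝ≥0∞} (hφ : MonotoneOn φ (Iic ybar))
    (hrc : RightContOn φ (Iic ybar)) {f : X → ℝ≥0∞} (hfy : ∀ x, f x ≤ ybar) (s : ℝ≥0∞) :
    ∃ t ≤ ybar, min s (m (D ∩ {x | s ≤ φ (f x)})) ≤ φ t ∧
      min s (m (D ∩ {x | s ≤ φ (f x)})) ≤ m (D ∩ {x | t ≤ f x}) := by
  by_cases hs : s ≤ φ ybar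
  · obtain ⟨t₀, ht₀, hiff⟩ := hφ.exists_le_apply_iff_le hrc hs
    have hlevel : {x | s ≤ φ (f x)} = {x | t₀ ≤ f x} := Set.ext fun x => hiff _ (hfy x)
    rw [hlevel]
    exact ⟨t₀, ht₀, (min_le_left _ _).trans ((hiff t₀ ht₀).mpr le_rfl), min_le_right _ _⟩
  · have hempty : D ∩ {x | s ≤ φ (f x)} = ∅ := eq_empty_of_forall_notMem fun x hx =>
      hs (hx.2.trans (hφ (hfy x) self_mem_Iic (hfy x)))
    exact ⟨0, zero_le, by simp [hempty, h0], by simp [hempty, h0]⟩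

end Sugeno

lemma apply_le_apply_min_of_le {ybar t a M : ℝ≥0∞} {φ₁ φ₂ ψ₁ ψ₂ : ℝ≥0∞ → ℝ≥0∞}
    (hφ₁ : MonotoneOn φ₁ (Iic ybar)) (hφ₂ : MonotoneOn φ₂ (Iic ybar)) (hφ_eq : φ₁ ybar = φ₂ ybar)
    (hψ₁ : MonotoneOn ψ₁ (Iic (φ₁ ybar))) (hψ₂ : MonotoneOn ψ₂ (Iic (φ₁ ybar)))
    (hψ₁₂ : ∀ x ∈ Iic (φ₁ ybar), ψ₂ x ≤ ψ₁ x) (hψφ₂ : ∀ x ∈ Iic ybar, ψ₂ (φ₂ x) ≤ x)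
    (hψφ₁ : ∀ x ∈ Iic ybar, x ≤ ψ₁ (φ₁ x)) (ht : t ≤ ybar) (haφ : a ≤ φ₂ t) (haM : a ≤ M) :
    ψ₂ a ≤ ψ₁ (min (φ₁ t) M) := by
  have hφ₂t : φ₂ t ≤ φ₁ ybar := hφ_eq ▸ hφ₂ ht self_mem_Iic ht
  have hb : min (φ₁ t) M ≤ φ₁ ybar := (min_le_left _ _).trans (hφ₁ ht self_mem_Iic ht)
  rcases le_or_gt a (min (φ₁ t) M) with hab | hba
  · exact (hψ₁₂ a (haφ.trans hφ₂t)).trans (hψ₁ (haφ.trans hφ₂t) hb hab)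
  · have hφ₁t : φ₁ t < a := (min_lt_iff.mp hba).resolve_right haM.not_gt
    have hb_eq : min (φ₁ t) M = φ₁ t := min_eq_left (hφ₁t.le.trans haM)
    calc ψ₂ a ≤ ψ₂ (φ₂ t) := hψ₂ (haφ.trans hφ₂t) hφ₂t haφ
      _ ≤ t := hψφ₂ t ht
      _ ≤ ψ₁ (φ₁ t) := hψφ₁ t ht
      _ = ψ₁ (min (φ₁ t) M) := by rw [hb_eq]

theorem statement14_general {X : Type*} [MeasurableSpace X]
    (ybar : ℝ≥0∞)
    (m : Set X → ℝ≥0∞) (hm : MonotoneMeasure m)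
    (φ₁ φ₂ ψ₁ ψ₂ : ℝ≥0∞ → ℝ≥0∞)
    (hφ₁_maps : Set.MapsTo φ₁ (Set.Iic ybar) (Set.Iic ybar))
    (hφ₁_mono : StrictMonoOn φ₁ (Set.Iic ybar))
    (hφ₂_mono : StrictMonoOn φ₂ (Set.Iic ybar))
    (hφ₂_rc : RightContOn φ₂ (Set.Iic ybar))
    (hφ_eq : φ₁ ybar = φ₂ ybar)
    (hψ₁_mono : MonotoneOn ψ₁ (Set.Iic (φ₁ ybar)))
    (hψ₂_mono : MonotoneOn ψ₂ (Set.Iic (φ₁ ybar)))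
    (hψ₂_lc : LeftContOn ψ₂ (Set.Iic (φ₁ ybar)))
    (hψ₁₂ : ∀ x ∈ Set.Iic (φ₁ ybar), ψ₂ x ≤ ψ₁ x)
    (hψφ₂ : ∀ x ∈ Set.Iic ybar, ψ₂ (φ₂ x) ≤ x)
    (hψφ₁ : ∀ x ∈ Set.Iic ybar, x ≤ ψ₁ (φ₁ x))
    (f : X → ℝ≥0∞) (hfy : ∀ x, f x ≤ ybar)
    (A : Set X) :
    ψ₂ (uSugeno ybar (fun a b => min a b) m A fun x => φ₂ (f x))
      ≤ ψ₁ (uSugeno ybar (fun a b => min a b) m A fun x => φ₁ (f x)) := by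
  have hJ₁ : (uSugeno ybar (fun a b => min a b) m A fun x => φ₁ (f x)) ≤ φ₁ ybar :=
    uSugeno_min_le_of_le hm.1 fun x => hφ₁_mono.monotoneOn (hfy x) self_mem_Iic (hfy x)
  have hJ₂ : (uSugeno ybar (fun a b => min a b) m A fun x => φ₂ (f x)) ≤ φ₁ ybar :=
    uSugeno_min_le_of_le hm.1 fun x => hφ_eq ▸ hφ₂_mono.monotoneOn (hfy x) self_mem_Iic (hfy x)
  rw [uSugeno, hψ₂_mono.map_biSup_of_leftContOn nonempty_Iic hψ₂_lc hJ₂]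
  refine iSup₂_le fun s _ => ?_
  obtain ⟨t, ht, hφt, hMt⟩ := exists_min_levelSet_le hm.1 hφ₂_mono.monotoneOn hφ₂_rc hfy s
  calc _ ≤ ψ₁ (min (φ₁ t) (m (A ∩ {x | t ≤ f x}))) :=
        apply_le_apply_min_of_le hφ₁_mono.monotoneOn hφ₂_mono.monotoneOn hφ_eq hψ₁_mono
          hψ₂_mono hψ₁₂ hψφ₂ hψφ₁ ht hφt hMt
    _ ≤ _ := hψ₁_mono ((min_le_left _ _).trans (hφ₁_mono.monotoneOn ht self_mem_Iic ht)) hJ₁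
        (min_le_uSugeno_comp hφ₁_maps hφ₁_mono hfy ht)

theorem statement14 {X : Type*} [MeasurableSpace X]
    (ybar : ℝ≥0∞) (hybar : 0 < ybar)
    (m : Set X → ℝ≥0∞) (hm : MonotoneMeasure m)
    (φ₁ φ₂ ψ₁ ψ₂ : ℝ≥0∞ → ℝ≥0∞)
    (hφ₁_maps : Set.MapsTo φ₁ (Set.Iic ybar) (Set.Iic ybar))
    (hφ₁_mono : StrictMonoOn φ₁ (Set.Iic ybar))
    (hφ₁_rc : RightContOn φ₁ (Set.Iic ybar))
    (hφ₂_maps : Set.MapsTo φ₂ (Set.Iic ybar) (Set.Iic ybar))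
    (hφ₂_mono : StrictMonoOn φ₂ (Set.Iic ybar))
    (hφ₂_rc : RightContOn φ₂ (Set.Iic ybar))
    (hφ_eq : φ₁ ybar = φ₂ ybar)
    (hψ₁_maps : Set.MapsTo ψ₁ (Set.Iic (φ₁ ybar)) (Set.Iic ybar))
    (hψ₁_mono : MonotoneOn ψ₁ (Set.Iic (φ₁ ybar)))
    (hψ₂_maps : Set.MapsTo ψ₂ (Set.Iic (φ₁ ybar)) (Set.Iic ybar))
    (hψ₂_mono : MonotoneOn ψ₂ (Set.Iic (φ₁ ybar)))
    (hψ₂_lc : LeftContOn ψ₂ (Set.Iic (φ₁ ybar)))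
    (hψ₁₂ : ∀ x ∈ Set.Iic (φ₁ ybar), ψ₂ x ≤ ψ₁ x)
    (hψφ₂ : ∀ x ∈ Set.Iic ybar, ψ₂ (φ₂ x) ≤ x)
    (hψφ₁ : ∀ x ∈ Set.Iic ybar, x ≤ ψ₁ (φ₁ x))
    (f : X → ℝ≥0∞) (hf : Measurable f) (hfy : ∀ x, f x ≤ ybar)
    (A : Set X) (hA : MeasurableSet A) :
    ψ₂ (uSugeno ybar (fun a b => min a b) m A fun x => φ₂ (f x))
      ≤ ψ₁ (uSugeno ybar (fun a b => min a b) m A fun x => φ₁ (f x)) :=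
  statement14_general ybar m hm φ₁ φ₂ ψ₁ ψ₂ hφ₁_maps hφ₁_mono hφ₂_mono hφ₂_rc hφ_eq hψ₁_mono
    hψ₂_mono hψ₂_lc hψ₁₂ hψφ₂ hψφ₁ f hfy A
end
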